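/- arXiv:math-ph/0405043 — 6 statements merged into one kernel-verified Lean document; each statement's English description precedes it below -/
import Mathlib

section
/- For a,b,c with a ≥ b ≥ c > 3, setting λ = 1 - 3/c, every point (x,y,z) in the first octant with x²/(λa)² + y²/(λb)² + z²/(λc)² ≤ 1 satisfies (x+1)²/a² + (y+1)²/b² + (z+1)²/c² ≤ 1. -/
set_option maxHeartbeats 1000000


/-- For a ≥ b ≥ c > 3 and λ = 1 - 3/c, every first-octant point of the shrunk
ellipsoid with semi-axes λa, λb, λc, after translation by (1,1,1), stays inside the
ellipsoid with semi-axes a, b, c. -/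
theorem shrunk_ellipsoid_shift (a b c x y z : ℝ)
    (hab : b ≤ a) (hbc : c ≤ b) (hc : 3 < c)
    (hx : 0 ≤ x) (hy : 0 ≤ y) (hz : 0 ≤ z)
    (h : x ^ 2 / ((1 - 3 / c) * a) ^ 2 + y ^ 2 / ((1 - 3 / c) * b) ^ 2 +
        z ^ 2 / ((1 - 3 / c) * c) ^ 2 ≤ 1) :
    (x + 1) ^ 2 / a ^ 2 + (y + 1) ^ 2 / b ^ 2 + (z + 1) ^ 2 / c ^ 2 ≤ 1 := by
  have hc0 : 0 < c := by linarith
  have hb0 : 0 < b := by linarith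
  have ha0 : 0 < a := by linarith
  obtain ⟨L, hLdef⟩ : ∃ L : ℝ, L = 1 - 3 / c := ⟨_, rfl⟩
  rw [← hLdef] at h
  have hL0 : 0 < L := by
    have h1 : 3 / c < 1 := (div_lt_one hc0).mpr (by linarith)
    rw [hLdef]; linarith
  have hL1 : L ≤ 1 := by
    have : 0 < 3 / c := by positivity
    rw [hLdef]; linarith
  obtain ⟨u, hu⟩ : ∃ u : ℝ, u = x / (L * a) := ⟨_, rfl⟩
  obtain ⟨v, hv⟩ : ∃ v : ℝ, v = y / (L * b) := ⟨_, rfl⟩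
  obtain ⟨w, hw⟩ : ∃ w : ℝ, w = z / (L * c) := ⟨_, rfl⟩
  have hu0 : 0 ≤ u := by rw [hu]; positivity
  have hv0 : 0 ≤ v := by rw [hv]; positivity
  have hw0 : 0 ≤ w := by rw [hw]; positivity
  have h1 : u ^ 2 + v ^ 2 + w ^ 2 ≤ 1 := by
    rw [hu, hv, hw]
    simpa [div_pow] using h
  have hs : u + v + w ≤ 7 / 4 := by
    nlinarith [sq_nonneg (u - v), sq_nonneg (v - w), sq_nonneg (u - w),
      sq_nonneg (u + v + w)]
  have hxeq : x = L * a * u := by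
    rw [hu]; field_simp
  have hyeq : y = L * b * v := by
    rw [hv]; field_simp
  have hzeq : z = L * c * w := by
    rw [hw]; field_simp
  have hA : (x + 1) ^ 2 / a ^ 2 = L ^ 2 * u ^ 2 + 2 * L * u / a + 1 / a ^ 2 := by
    rw [hxeq]; field_simp; ring
  have hB : (y + 1) ^ 2 / b ^ 2 = L ^ 2 * v ^ 2 + 2 * L * v / b + 1 / b ^ 2 := by
    rw [hyeq]; field_simp; ring
  have hC : (z + 1) ^ 2 / c ^ 2 = L ^ 2 * w ^ 2 + 2 * L * w / c + 1 / c ^ 2 := by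
    rw [hzeq]; field_simp; ring
  -- bound the a,b terms by the corresponding c terms
  have hua : 2 * L * u / a ≤ 2 * L * u / c := by
    gcongr <;> first | positivity | linarith
  have hvb : 2 * L * v / b ≤ 2 * L * v / c := by
    gcongr <;> first | positivity | linarith
  have h1a : 1 / a ^ 2 ≤ 1 / c ^ 2 := by
    gcongr <;> linarith
  have h1b : 1 / b ^ 2 ≤ 1 / c ^ 2 := by
    gcongr <;> linarith
  -- key inequality: L² + 2L(u+v+w)/c + 3/c² ≤ 1
  have hkey : L ^ 2 * (u ^ 2 + v ^ 2 + w ^ 2) + 2 * L * (u + v + w) / c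
      + 3 / c ^ 2 ≤ 1 := by
    have hq1 : L ^ 2 * (u ^ 2 + v ^ 2 + w ^ 2) ≤ L ^ 2 := by
      have := mul_le_mul_of_nonneg_left h1 (sq_nonneg L)
      linarith
    have hq2 : 2 * L * (u + v + w) / c ≤ 2 * L * (7 / 4) / c := by
      gcongr <;> first | positivity | exact hs
    have hL2 : L = (c - 3) / c := by rw [hLdef]; field_simp
    have hfin : L ^ 2 + 2 * L * (7 / 4) / c + 3 / c ^ 2 ≤ 1 := by
      rw [hL2]
      have hne : (c : ℝ) ≠ 0 := ne_of_gt hc0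
      have heq : ((c - 3) / c) ^ 2 + 2 * ((c - 3) / c) * (7 / 4) / c + 3 / c ^ 2
          = ((c - 3) ^ 2 + 7 / 2 * (c - 3) + 3) / c ^ 2 := by
        field_simp
        ring
      rw [heq, div_le_one (by positivity)]
      have hpoly : (c - 3) ^ 2 + 7 / 2 * (c - 3) + 3
          = c ^ 2 - 5 / 2 * c + 3 / 2 := by ring
      rw [hpoly]
      linarith
    calc L ^ 2 * (u ^ 2 + v ^ 2 + w ^ 2) + 2 * L * (u + v + w) / c + 3 / c ^ 2
        ≤ L ^ 2 + 2 * L * (7 / 4) / c + 3 / c ^ 2 :=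
          add_le_add (add_le_add hq1 hq2) le_rfl
      _ ≤ 1 := hfin
  have hA' : (x + 1) ^ 2 / a ^ 2 ≤ L ^ 2 * u ^ 2 + 2 * L * u / c + 1 / c ^ 2 := by
    rw [hA]; exact add_le_add (add_le_add le_rfl hua) h1a
  have hB' : (y + 1) ^ 2 / b ^ 2 ≤ L ^ 2 * v ^ 2 + 2 * L * v / c + 1 / c ^ 2 := by
    rw [hB]; exact add_le_add (add_le_add le_rfl hvb) h1b
  have hC' : (z + 1) ^ 2 / c ^ 2 ≤ L ^ 2 * w ^ 2 + 2 * L * w / c + 1 / c ^ 2 := by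
    rw [hC]
  calc (x + 1) ^ 2 / a ^ 2 + (y + 1) ^ 2 / b ^ 2 + (z + 1) ^ 2 / c ^ 2
      ≤ (L ^ 2 * u ^ 2 + 2 * L * u / c + 1 / c ^ 2)
        + (L ^ 2 * v ^ 2 + 2 * L * v / c + 1 / c ^ 2)
        + (L ^ 2 * w ^ 2 + 2 * L * w / c + 1 / c ^ 2) :=
          add_le_add (add_le_add hA' hB') hC'
    _ = L ^ 2 * (u ^ 2 + v ^ 2 + w ^ 2) + 2 * L * (u + v + w) / c + 3 / c ^ 2 := by
        ring
    _ ≤ 1 := hkey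
end

section
/- With F_V as above (α₁ ≥ α₂ ≥ α₃ > 0, α₁+α₂+α₃ = 1), for every η ≥ 0, lim_{V→∞} F_V(η) = (√2/(3π²))·η^{3/2}. -/
/-!
Rescale the quantum numbers to `x = (n₁ / V^α₁, n₂ / V^α₂, n₃ / V^α₃)`. Then `V · F_V(η)` counts
the points of the grid `∏ⱼ V^(-αⱼ) ℕ₊` in the positive octant of the closed ball of squared radius
`t = 2η/π² + d`, where `d = Σⱼ V^(-2αⱼ)`. Since `Σ αⱼ = 1`, `1/V` is exactly the volume of a grid
cell. So `F_V(η)` is the volume of the union of the cells whose upper corners are the counted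
points. This union lies inside the octant of radius `√t`. By Minkowski's inequality it contains
the octant of radius `√t - √d`. Because `d → 0`, both radii tend to `√(2η)/π`, and the
octant of radius `ρ` has volume `πρ³/6`. We compute that volume by slicing it into quarter discs.
-/

/-- The finite-volume integrated density of states, shifted by the ground-state
energy, for the anisotropic box with sides V^α₁, V^α₂, V^α₃. -/
noncomputable def FV (α₁ α₂ α₃ V η : ℝ) : ℝ :=
  (1 / V) * ({n : ℕ × ℕ × ℕ | 0 < n.1 ∧ 0 < n.2.1 ∧ 0 < n.2.2 ∧
    Real.pi ^ 2 / 2 * ((n.1 : ℝ) ^ 2 / V ^ (2 * α₁) + (n.2.1 : ℝ) ^ 2 / V ^ (2 * α₂) +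
        (n.2.2 : ℝ) ^ 2 / V ^ (2 * α₃)) ≤
      η + Real.pi ^ 2 / 2 * (V ^ (-(2 * α₁)) + V ^ (-(2 * α₂)) + V ^ (-(2 * α₃)))} :
    Set (ℕ × ℕ × ℕ)).ncard

open MeasureTheory Set Filter Topology Real Function

section Orthant

variable {ι : Type*} [Fintype ι]

variable (ι) in
def orthantSublevel (t : ℝ) : Set (ι → ℝ) := {x | 0 ≤ x ∧ ∑ i, x i ^ 2 ≤ t}

lemma orthantSublevel_eq_empty {t : ℝ} (ht : t < 0) : orthantSublevel ι t = ∅ :=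
  eq_empty_of_forall_notMem fun _ hx => (hx.2.trans_lt ht).not_ge (by positivity)

lemma volume_orthantSublevel_succ (n : ℕ) (t : ℝ) :
    volume (orthantSublevel (Fin (n + 1)) t) =
      ∫⁻ a in Ici 0, volume (orthantSublevel (Fin n) (t - a ^ 2)) := by
  set S : Set (ℝ × (Fin n → ℝ)) := {p | 0 ≤ p.1 ∧ p.2 ∈ orthantSublevel (Fin n) (t - p.1 ^ 2)}
  have hS : MeasurableSet S :=
    (measurableSet_le measurable_const measurable_fst).inter <|
      (measurableSet_le measurable_const measurable_snd).inter <|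
        measurableSet_le (f := fun p : ℝ × (Fin n → ℝ) => ∑ i, p.2 i ^ 2)
          (g := fun p => t - p.1 ^ 2) (by fun_prop) (by fun_prop)
  have hpre : orthantSublevel (Fin (n + 1)) t =
      MeasurableEquiv.piFinSuccAbove (fun _ => ℝ) 0 ⁻¹' S := by
    ext x
    simp [S, orthantSublevel, Fin.sum_univ_succ, Pi.le_def, Fin.forall_fin_succ, Fin.tail,
      le_sub_iff_add_le', and_assoc]
  rw [hpre, (volume_preserving_piFinSuccAbove (fun _ => ℝ) 0).measure_preimage
    hS.nullMeasurableSet, Measure.volume_eq_prod, Measure.prod_apply hS,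
    ← lintegral_indicator measurableSet_Ici]
  congr with a
  by_cases ha : 0 ≤ a <;> simp [S, ha, preimage]

lemma volume_orthantSublevel_one (t : ℝ) :
    volume (orthantSublevel (Fin 1) t) = ENNReal.ofReal √t := by
  rcases lt_or_ge t 0 with ht | ht
  · simp [orthantSublevel_eq_empty ht, Real.sqrt_eq_zero'.mpr ht.le]
  have : orthantSublevel (Fin 1) t =
      MeasurableEquiv.funUnique (Fin 1) ℝ ⁻¹' Icc 0 √t := by
    ext x
    simp only [orthantSublevel, Pi.le_def, Fin.forall_fin_one, Fin.sum_univ_one, mem_ofPred_eq,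
      mem_preimage, MeasurableEquiv.funUnique_apply, mem_Icc]
    exact and_congr_right fun hx => (Real.le_sqrt hx ht).symm
  rw [this]
  exact ((volume_preserving_funUnique (Fin 1) ℝ).measure_preimage_equiv _).trans
    (by rw [Real.volume_Icc, sub_zero])

lemma lintegral_Ici_ofReal_eq_intervalIntegral {f : ℝ → ℝ} {b : ℝ} (hb : 0 ≤ b)
    (hf : IntegrableOn f (Icc 0 b)) (hf_nonneg : ∀ a ∈ Icc 0 b, 0 ≤ f a)
    (hf_nonpos : ∀ a, b < a → f a ≤ 0) :
    ∫⁻ a in Ici 0, ENNReal.ofReal (f a) = ENNReal.ofReal (∫ a in 0..b, f a) := by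
  rw [← Icc_union_Ioi_eq_Ici hb,
    lintegral_union measurableSet_Ioi ((Iic_disjoint_Ioi le_rfl).mono_left Icc_subset_Iic_self),
    setLIntegral_congr_fun measurableSet_Ioi
      (fun a ha => ENNReal.ofReal_eq_zero.2 (hf_nonpos a ha)), lintegral_zero, add_zero,
    intervalIntegral.integral_of_le hb, ← integral_Icc_eq_integral_Ioc,
    ofReal_integral_eq_lintegral_ofReal hf
      ((ae_restrict_iff' measurableSet_Icc).2 (.of_forall hf_nonneg))]

lemma integral_sqrt_sub_sq {t : ℝ} (ht : 0 ≤ t) : ∫ a in 0..√t, √(t - a ^ 2) = π / 4 * t := by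
  have hsubst : ∀ θ ∈ uIcc 0 (π / 2),
      √(t - (√t * sin θ) ^ 2) * (√t * cos θ) = t * cos θ ^ 2 := by
    intro θ hθ
    rw [uIcc_of_le (by positivity)] at hθ
    have hcos : 0 ≤ cos θ := cos_nonneg_of_mem_Icc ⟨by linarith [hθ.1, pi_pos], hθ.2⟩
    have hpyth : t - (√t * sin θ) ^ 2 = (√t * cos θ) ^ 2 := by
      rw [mul_pow, mul_pow, Real.sq_sqrt ht, cos_sq']
      ring
    rw [hpyth, Real.sqrt_sq (by positivity), ← sq, mul_pow, Real.sq_sqrt ht]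
  calc ∫ a in 0..√t, √(t - a ^ 2) = ∫ a in √t * sin 0..√t * sin (π / 2), √(t - a ^ 2) := by simp
    _ = ∫ θ in 0..π / 2, √(t - (√t * sin θ) ^ 2) * (√t * cos θ) :=
        (intervalIntegral.integral_comp_mul_deriv (fun θ _ => (hasDerivAt_sin θ).const_mul √t)
          (by fun_prop) (by fun_prop)).symm
    _ = ∫ θ in 0..π / 2, t * cos θ ^ 2 := intervalIntegral.integral_congr hsubst
    _ = π / 4 * t := by
        simp only [intervalIntegral.integral_const_mul, integral_cos_sq, cos_pi_div_two,
          sin_pi_div_two, cos_zero, sin_zero, mul_zero, mul_one, sub_self, zero_add, sub_zero]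
        ring

lemma volume_orthantSublevel_two (t : ℝ) :
    volume (orthantSublevel (Fin 2) t) = ENNReal.ofReal (π / 4 * t) := by
  rcases lt_or_ge t 0 with ht | ht
  · rw [orthantSublevel_eq_empty ht, measure_empty,
      ENNReal.ofReal_of_nonpos (mul_nonpos_of_nonneg_of_nonpos (by positivity) ht.le)]
  rw [volume_orthantSublevel_succ 1]
  simp_rw [volume_orthantSublevel_one]
  rw [lintegral_Ici_ofReal_eq_intervalIntegral (Real.sqrt_nonneg t)
    (by fun_prop : Continuous fun a : ℝ => √(t - a ^ 2)).integrableOn_Icc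
    (fun _ _ => Real.sqrt_nonneg _) ?_, integral_sqrt_sub_sq ht]
  intro a ha
  have : t < a ^ 2 := (Real.sqrt_lt' ((Real.sqrt_nonneg t).trans_lt ha)).1 ha
  exact (Real.sqrt_eq_zero'.2 (by linarith)).le

lemma volume_orthantSublevel_three (t : ℝ) :
    volume (orthantSublevel (Fin 3) t) = ENNReal.ofReal (π / 6 * √t ^ 3) := by
  rcases lt_or_ge t 0 with ht | ht
  · simp [orthantSublevel_eq_empty ht, Real.sqrt_eq_zero'.2 ht.le]
  have hsq := Real.sq_sqrt ht
  rw [volume_orthantSublevel_succ 2]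
  simp_rw [volume_orthantSublevel_two]
  rw [lintegral_Ici_ofReal_eq_intervalIntegral (Real.sqrt_nonneg t)
    (by fun_prop : Continuous fun a : ℝ => π / 4 * (t - a ^ 2)).integrableOn_Icc ?_ ?_]
  · congr 1
    simp only [intervalIntegral.integral_const_mul, intervalIntegrable_const,
      intervalIntegral.intervalIntegrable_pow, intervalIntegral.integral_sub,
      intervalIntegral.integral_const, integral_pow, smul_eq_mul, sub_zero]
    linear_combination (-(π / 4) * √t) * hsq
  · intro a ha
    have : a ^ 2 ≤ t := hsq ▸ pow_le_pow_left₀ ha.1 ha.2 2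
    exact mul_nonneg (by positivity) (by linarith)
  · intro a ha
    have : t < a ^ 2 := (Real.sqrt_lt' ((Real.sqrt_nonneg t).trans_lt ha)).1 ha
    exact mul_nonpos_of_nonneg_of_nonpos (by positivity) (by linarith)

end Orthant

lemma sqrt_sum_add_sq_le {ι : Type*} [Fintype ι] (x y : ι → ℝ) :
    √(∑ i, (x i + y i) ^ 2) ≤ √(∑ i, x i ^ 2) + √(∑ i, y i ^ 2) := by
  simpa [EuclideanSpace.norm_eq] using norm_add_le (WithLp.toLp 2 x) (WithLp.toLp 2 y)

section Lattice

variable {ι : Type*} (L : ι → ℝ)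

def latticeCell (n : ι → ℕ) : Set (ι → ℝ) :=
  univ.pi fun i => Ico (((n i : ℝ) - 1) / L i) (n i / L i)

variable {L}

lemma mem_latticeCell_iff (hL : ∀ i, 0 < L i) {n : ι → ℕ} {x : ι → ℝ} :
    x ∈ latticeCell L n ↔ ∀ i, ⌊x i * L i⌋ = (n i : ℤ) - 1 := by
  simp only [latticeCell, mem_univ_pi, mem_Ico, Int.floor_eq_iff, div_le_iff₀ (hL _),
    lt_div_iff₀ (hL _)]
  push_cast
  simp

lemma pairwise_disjoint_latticeCell (hL : ∀ i, 0 < L i) :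
    Pairwise (Disjoint on latticeCell L) :=
  fun n m hnm => disjoint_left.2 fun x hn hm => hnm <| funext fun i => by
    have := ((mem_latticeCell_iff hL).1 hn i).symm.trans ((mem_latticeCell_iff hL).1 hm i)
    omega

variable [Fintype ι]

lemma volume_latticeCell (hL : ∀ i, 0 < L i) (n : ι → ℕ) :
    volume (latticeCell L n) = ENNReal.ofReal (∏ i, L i)⁻¹ := by
  rw [latticeCell, Real.volume_pi_Ico, ← Finset.prod_inv_distrib,
    ENNReal.ofReal_prod_of_nonneg fun i _ => (inv_pos.2 (hL i)).le]
  refine Finset.prod_congr rfl fun i _ => congrArg ENNReal.ofReal ?_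
  field_simp
  ring

lemma volume_biUnion_latticeCell (hL : ∀ i, 0 < L i) {A : Set (ι → ℕ)} (hA : A.Finite) :
    volume (⋃ n ∈ A, latticeCell L n) = A.ncard * ENNReal.ofReal (∏ i, L i)⁻¹ := by
  have hunion : ⋃ n ∈ A, latticeCell L n = ⋃ n ∈ hA.toFinset, latticeCell L n := by simp
  rw [hunion, measure_biUnion_finset (fun n _ m _ hnm => pairwise_disjoint_latticeCell hL hnm)
    fun n _ => MeasurableSet.univ_pi fun _ => measurableSet_Ico]
  simp [volume_latticeCell hL, Set.ncard_eq_toFinset_card _ hA]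

variable (L) in
def positiveLatticePoints (t : ℝ) : Set (ι → ℕ) :=
  {n | (∀ i, 0 < n i) ∧ ∑ i, ((n i : ℝ) / L i) ^ 2 ≤ t}

lemma positiveLatticePoints_finite (hL : ∀ i, 0 < L i) (t : ℝ) :
    (positiveLatticePoints L t).Finite := by
  refine (Set.Finite.pi fun i => finite_Iic ⌈√t * L i⌉₊).subset
    fun n hn => mem_univ_pi.2 fun i => ?_
  have hsq : ((n i : ℝ) / L i) ^ 2 ≤ t :=
    (Finset.single_le_sum (fun j _ => sq_nonneg ((n j : ℝ) / L j)) (Finset.mem_univ i)).trans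
      hn.2
  have : (n i : ℝ) / L i ≤ √t := Real.le_sqrt_of_sq_le hsq
  rw [div_le_iff₀ (hL i)] at this
  exact Nat.cast_le.1 (this.trans (Nat.le_ceil _))

lemma biUnion_latticeCell_subset_orthantSublevel (hL : ∀ i, 0 < L i) (t : ℝ) :
    ⋃ n ∈ positiveLatticePoints L t, latticeCell L n ⊆ orthantSublevel ι t := by
  simp only [iUnion_subset_iff]
  rintro n ⟨hn_pos, hn_sum⟩ x hx
  have hx_bounds : ∀ i, 0 ≤ x i ∧ x i ≤ n i / L i := fun i => by
    obtain ⟨hlow, hhigh⟩ := mem_univ_pi.1 hx i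
    have : (1 : ℝ) ≤ n i := Nat.one_le_cast.2 (hn_pos i)
    exact ⟨(div_nonneg (by linarith) (hL i).le).trans hlow, hhigh.le⟩
  exact ⟨fun i => (hx_bounds i).1, hn_sum.trans' <| Finset.sum_le_sum fun i _ =>
    pow_le_pow_left₀ (hx_bounds i).1 (hx_bounds i).2 2⟩

lemma orthantSublevel_subset_biUnion_latticeCell (hL : ∀ i, 0 < L i) {t : ℝ}
    (ht : ∑ i, (L i)⁻¹ ^ 2 ≤ t) :
    orthantSublevel ι ((√t - √(∑ i, (L i)⁻¹ ^ 2)) ^ 2) ⊆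
      ⋃ n ∈ positiveLatticePoints L t, latticeCell L n := by
  rintro x ⟨hx_nonneg, hx_sum⟩
  set n : ι → ℕ := fun i => ⌊x i * L i⌋₊ + 1
  have hxL : ∀ i, 0 ≤ x i * L i := fun i => mul_nonneg (hx_nonneg i) (hL i).le
  have hcell : x ∈ latticeCell L n := (mem_latticeCell_iff hL).2 fun i => by
    simp [n, Int.natCast_floor_eq_floor (hxL i)]
  have hn_le : ∀ i, (n i : ℝ) / L i ≤ x i + (L i)⁻¹ := fun i => by
    rw [div_le_iff₀ (hL i), add_mul, inv_mul_cancel₀ (hL i).ne']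
    push_cast [n]
    linarith [Nat.floor_le (hxL i)]
  have hx_norm : √(∑ i, x i ^ 2) ≤ √t - √(∑ i, (L i)⁻¹ ^ 2) :=
    (Real.sqrt_le_sqrt hx_sum).trans_eq (Real.sqrt_sq (sub_nonneg.2 (Real.sqrt_le_sqrt ht)))
  refine mem_biUnion ⟨fun i => Nat.succ_pos _, ?_⟩ hcell
  calc ∑ i, ((n i : ℝ) / L i) ^ 2 ≤ ∑ i, (x i + (L i)⁻¹) ^ 2 :=
        Finset.sum_le_sum fun i _ =>
          pow_le_pow_left₀ (div_nonneg (Nat.cast_nonneg _) (hL i).le) (hn_le i) 2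
    _ = √(∑ i, (x i + (L i)⁻¹) ^ 2) ^ 2 :=
        (Real.sq_sqrt (Finset.sum_nonneg fun i _ => sq_nonneg _)).symm
    _ ≤ √t ^ 2 := pow_le_pow_left₀ (Real.sqrt_nonneg _)
        ((sqrt_sum_add_sq_le x _).trans (by linarith)) 2
    _ = t := Real.sq_sqrt ((Finset.sum_nonneg fun i _ => sq_nonneg _).trans ht)

lemma volume_orthantSublevel_le_ncard_positiveLatticePoints (hL : ∀ i, 0 < L i) {t : ℝ}
    (ht : ∑ i, (L i)⁻¹ ^ 2 ≤ t) :
    volume (orthantSublevel ι ((√t - √(∑ i, (L i)⁻¹ ^ 2)) ^ 2)) ≤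
      (positiveLatticePoints L t).ncard * ENNReal.ofReal (∏ i, L i)⁻¹ :=
  volume_biUnion_latticeCell hL (positiveLatticePoints_finite hL t) ▸
    measure_mono (orthantSublevel_subset_biUnion_latticeCell hL ht)

lemma ncard_positiveLatticePoints_le_volume_orthantSublevel (hL : ∀ i, 0 < L i) (t : ℝ) :
    (positiveLatticePoints L t).ncard * ENNReal.ofReal (∏ i, L i)⁻¹ ≤
      volume (orthantSublevel ι t) :=
  volume_biUnion_latticeCell hL (positiveLatticePoints_finite hL t) ▸
    measure_mono (biUnion_latticeCell_subset_orthantSublevel hL t)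

end Lattice

lemma ncard_positiveLatticePoints_div_prod_mem_Icc {L : Fin 3 → ℝ} (hL : ∀ i, 0 < L i) {t : ℝ}
    (ht : ∑ i, (L i)⁻¹ ^ 2 ≤ t) :
    (positiveLatticePoints L t).ncard / ∏ i, L i ∈
      Icc (π / 6 * (√t - √(∑ i, (L i)⁻¹ ^ 2)) ^ 3) (π / 6 * √t ^ 3) := by
  have hprod : 0 < ∏ i, L i := Finset.prod_pos fun i _ => hL i
  have hofReal : ENNReal.ofReal ((positiveLatticePoints L t).ncard / ∏ i, L i) =
      (positiveLatticePoints L t).ncard * ENNReal.ofReal (∏ i, L i)⁻¹ := by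
    rw [div_eq_mul_inv, ENNReal.ofReal_mul (Nat.cast_nonneg _), ENNReal.ofReal_natCast]
  have hlow := volume_orthantSublevel_le_ncard_positiveLatticePoints hL ht
  have hup := ncard_positiveLatticePoints_le_volume_orthantSublevel hL t
  rw [volume_orthantSublevel_three, ← hofReal,
    Real.sqrt_sq (sub_nonneg.2 (Real.sqrt_le_sqrt ht))] at hlow
  rw [volume_orthantSublevel_three, ← hofReal] at hup
  exact ⟨(ENNReal.ofReal_le_ofReal_iff (by positivity)).1 hlow,
    (ENNReal.ofReal_le_ofReal_iff (by positivity)).1 hup⟩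

lemma FV_eq_ncard_positiveLatticePoints_div {α₁ α₂ α₃ V : ℝ} (η : ℝ) (hV : 0 < V) :
    FV α₁ α₂ α₃ V η = (positiveLatticePoints (fun i => V ^ ![α₁, α₂, α₃] i)
      (2 * η / π ^ 2 + ∑ i, (V ^ ![α₁, α₂, α₃] i)⁻¹ ^ 2)).ncard / V := by
  have hpow (a : ℝ) : V ^ (2 * a) = (V ^ a) ^ 2 := by
    rw [mul_comm, Real.rpow_mul hV.le, Real.rpow_two]
  have hrescale (X D : ℝ) : π ^ 2 / 2 * X ≤ η + π ^ 2 / 2 * D ↔ X ≤ 2 * η / π ^ 2 + D := by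
    rw [← mul_le_mul_iff_right₀ (by positivity : (0 : ℝ) < π ^ 2 / 2), mul_add]
    field_simp
  let toFin : ℕ × ℕ × ℕ → (Fin 3 → ℕ) := fun p => ![p.1, p.2.1, p.2.2]
  have h_inj : Injective toFin := fun p q h => by
    simp only [toFin, Matrix.vecCons_inj, and_true] at h
    exact Prod.ext h.1 (Prod.ext h.2.1 h.2.2)
  have h_range : ∀ n : Fin 3 → ℕ, n ∈ range toFin := fun n =>
    ⟨(n 0, n 1, n 2), by ext i; fin_cases i <;> rfl⟩
  rw [FV, one_div, inv_mul_eq_div, ← ncard_preimage_of_injective_subset_range h_inj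
    fun n _ => h_range n]
  congr 3
  ext ⟨a, b, c⟩
  simp [toFin, positiveLatticePoints, Fin.sum_univ_three, Fin.forall_fin_succ, hpow,
    Real.rpow_neg hV.le, hrescale, div_pow, and_assoc]

lemma FV_mem_Icc {α₁ α₂ α₃ V η : ℝ} (hη : 0 ≤ η) (hsum : α₁ + α₂ + α₃ = 1) (hV : 0 < V) :
    FV α₁ α₂ α₃ V η ∈
      Icc (π / 6 * (√(2 * η / π ^ 2 + ∑ i, (V ^ ![α₁, α₂, α₃] i)⁻¹ ^ 2) -
          √(∑ i, (V ^ ![α₁, α₂, α₃] i)⁻¹ ^ 2)) ^ 3)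
        (π / 6 * √(2 * η / π ^ 2 + ∑ i, (V ^ ![α₁, α₂, α₃] i)⁻¹ ^ 2) ^ 3) := by
  have hprod : ∏ i, V ^ ![α₁, α₂, α₃] i = V := by
    simp [Fin.prod_univ_three, ← Real.rpow_add hV, hsum]
  have h := ncard_positiveLatticePoints_div_prod_mem_Icc
    (fun i => Real.rpow_pos_of_pos hV (![α₁, α₂, α₃] i))
    (le_add_of_nonneg_left (by positivity : 0 ≤ 2 * η / π ^ 2))
  rwa [hprod, ← FV_eq_ncard_positiveLatticePoints_div η hV] at h

lemma sqrt_two_div_mul_rpow_three_halves {η : ℝ} (hη : 0 ≤ η) :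
    √2 / (3 * π ^ 2) * η ^ (3 / 2 : ℝ) = π / 6 * √(2 * η / π ^ 2) ^ 3 := by
  have h2 : √2 ^ 2 = 2 := Real.sq_sqrt (by norm_num)
  rw [Real.rpow_div_two_eq_sqrt _ hη, Real.sqrt_div' _ (by positivity),
    Real.sqrt_mul (by norm_num), Real.sqrt_sq pi_pos.le]
  norm_cast
  rw [div_pow, mul_pow, pow_succ √2 2, h2]
  field_simp
  ring

/-- In the thermodynamic limit, F_V(η) → (√2/(3π²)) η^{3/2}. -/
theorem FV_tendsto (α₁ α₂ α₃ : ℝ) (h12 : α₂ ≤ α₁) (h23 : α₃ ≤ α₂) (h3 : 0 < α₃)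
    (hsum : α₁ + α₂ + α₃ = 1) (η : ℝ) (hη : 0 ≤ η) :
    Filter.Tendsto (fun V : ℝ => FV α₁ α₂ α₃ V η) Filter.atTop
      (nhds (Real.sqrt 2 / (3 * Real.pi ^ 2) * η ^ (3 / 2 : ℝ))) := by
  have h2 : 0 < α₂ := h3.trans_le h23
  have hα : ∀ i, 0 < ![α₁, α₂, α₃] i := by
    intro i
    fin_cases i
    exacts [h2.trans_le h12, h2, h3]
  have hd : Tendsto (fun V : ℝ => ∑ i, (V ^ ![α₁, α₂, α₃] i)⁻¹ ^ 2) atTop (𝓝 0) := by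
    simpa using tendsto_finsetSum Finset.univ fun i _ =>
      ((tendsto_rpow_atTop (hα i)).inv_tendsto_atTop).pow 2
  have hbounds := (eventually_gt_atTop 0).mono fun V hV => FV_mem_Icc hη hsum hV
  rw [sqrt_two_div_mul_rpow_three_halves hη]
  refine tendsto_of_tendsto_of_tendsto_of_le_of_le' ?_ ?_ (hbounds.mono fun _ h => h.1)
    (hbounds.mono fun _ h => h.2)
  · simpa using ((((hd.const_add _).sqrt).sub hd.sqrt).pow 3).const_mul (π / 6)
  · simpa using (((hd.const_add _).sqrt).pow 3).const_mul (π / 6)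
end

section
/- For the perfect Bose gas, the canonical partition functions satisfy the log-concavity property: Z_V(m+1)/Z_V(m) ≥ Z_V(m+2)/Z_V(m+1) for all m ≥ 0. -/
/-!
With `a k = exp (-β E k)`, `Z_V` is the coefficient sequence of the generating function
`∏_k (1 - a_k X)⁻¹`. Multiplying a power series with positive log-concave coefficients by
`(1 - a X)⁻¹`, i.e. passing to `d (n + 1) = a * d n + c (n + 1)`, keeps the coefficients positive
and log-concave, so every finite product `∏_{k < K} (1 - a_k X)⁻¹` has positive log-concave
coefficients. Summability of the `a_k` makes these coefficients converge, as `K → ∞`, to the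
partition sums, and log-concavity passes to the limit.
-/

/-- Canonical partition function of the perfect Bose gas: the sum over occupation
sequences (finitely supported functions ℕ → ℕ) with total particle number n of the
Boltzmann weight exp(-β Σ_k n_k E_k). -/
noncomputable def Zcan (β : ℝ) (E : ℕ → ℝ) (n : ℕ) : ℝ :=
  ∑' f : {f : ℕ →₀ ℕ // f.sum (fun _ m => m) = n},
    Real.exp (-β * (f : ℕ →₀ ℕ).sum (fun k m => (m : ℝ) * E k))

open Finset Filter Topology PowerSeries

def IsLogConcave (c : ℕ → ℝ) : Prop :=
  ∀ n, c n * c (n + 2) ≤ c (n + 1) ^ 2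

namespace IsLogConcave

theorem div_le_div {c : ℕ → ℝ} (hc : IsLogConcave c) (hpos : ∀ n, 0 < c n) (n : ℕ) :
    c (n + 2) / c (n + 1) ≤ c (n + 1) / c n := by
  rw [div_le_div_iff₀ (hpos _) (hpos _)]
  linarith [hc n]

theorem of_tendsto {ι : Type*} {l : Filter ι} [l.NeBot] {c : ι → ℕ → ℝ} {z : ℕ → ℝ}
    (hc : ∀ᶠ i in l, IsLogConcave (c i)) (hz : ∀ n, Tendsto (fun i => c i n) l (𝓝 (z n))) :
    IsLogConcave z := fun n =>
  le_of_tendsto_of_tendsto ((hz n).mul (hz (n + 2))) ((hz (n + 1)).pow 2) (hc.mono fun _ hi => hi n)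

end IsLogConcave

section GeometricConvolution

variable {c d : ℕ → ℝ} {a : ℝ}

theorem pos_of_succ_eq_mul_add (hc : ∀ n, 0 < c n) (ha : 0 ≤ a) (hd0 : d 0 = c 0)
    (hd : ∀ n, d (n + 1) = a * d n + c (n + 1)) (n : ℕ) : 0 < d n := by
  induction n with
  | zero => exact hd0 ▸ hc 0
  | succ n ih => exact hd n ▸ add_pos_of_nonneg_of_pos (mul_nonneg ha ih.le) (hc _)

theorem mul_le_mul_of_succ_eq_mul_add (hc : ∀ n, 0 < c n) (hlc : IsLogConcave c) (ha : 0 ≤ a)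
    (hd0 : d 0 = c 0) (hd : ∀ n, d (n + 1) = a * d n + c (n + 1)) (n : ℕ) :
    c (n + 2) * d n ≤ c (n + 1) * d (n + 1) := by
  have hdpos := pos_of_succ_eq_mul_add hc ha hd0 hd
  induction n with
  | zero =>
    rw [hd 0, hd0]
    nlinarith [hlc 0, mul_nonneg (mul_nonneg ha (hc 0).le) (hc 1).le]
  | succ n ih =>
    have h : c (n + 3) * d n ≤ c (n + 2) * d (n + 1) := by
      refine le_of_mul_le_mul_left ?_ (hc (n + 2))
      calc c (n + 2) * (c (n + 3) * d n) = c (n + 3) * (c (n + 2) * d n) := by ring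
        _ ≤ c (n + 3) * (c (n + 1) * d (n + 1)) := by gcongr; exact (hc _).le
        _ = c (n + 1) * c (n + 3) * d (n + 1) := by ring
        _ ≤ c (n + 2) ^ 2 * d (n + 1) := by gcongr; exact (hdpos _).le; exact hlc (n + 1)
        _ = c (n + 2) * (c (n + 2) * d (n + 1)) := by ring
    calc c (n + 3) * d (n + 1) = a * (c (n + 3) * d n) + c (n + 1) * c (n + 3) := by
          rw [hd n]; ring
      _ ≤ a * (c (n + 2) * d (n + 1)) + c (n + 2) ^ 2 := by gcongr; exact hlc (n + 1)
      _ = c (n + 2) * d (n + 2) := by rw [hd (n + 1)]; ring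

theorem IsLogConcave.of_succ_eq_mul_add (hc : ∀ n, 0 < c n) (hlc : IsLogConcave c) (ha : 0 ≤ a)
    (hd0 : d 0 = c 0) (hd : ∀ n, d (n + 1) = a * d n + c (n + 1)) : IsLogConcave d := fun n =>
  calc d n * d (n + 2) = a * (d n * d (n + 1)) + c (n + 2) * d n := by rw [hd (n + 1)]; ring
    _ ≤ a * (d n * d (n + 1)) + c (n + 1) * d (n + 1) :=
      add_le_add_right (mul_le_mul_of_succ_eq_mul_add hc hlc ha hd0 hd n) _
    _ = d (n + 1) ^ 2 := by rw [hd n]; ring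

end GeometricConvolution

namespace PowerSeries

variable {R : Type*} [CommSemiring R]

theorem coeff_zero_mul_mk_pow (F : R⟦X⟧) (a : R) :
    coeff 0 (F * mk (a ^ ·)) = coeff 0 F := by
  simp [coeff_zero_eq_constantCoeff]

theorem coeff_succ_mul_mk_pow (F : R⟦X⟧) (a : R) (n : ℕ) :
    coeff (n + 1) (F * mk (a ^ ·)) = a * coeff n (F * mk (a ^ ·)) + coeff (n + 1) F := by
  rw [coeff_mul, coeff_mul, Nat.sum_antidiagonal_succ', mul_sum]
  simp only [coeff_mk, pow_zero, mul_one, pow_succ]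
  rw [add_comm]
  congr 1
  exact sum_congr rfl fun _ _ => by ring

theorem coeff_mul_mk_pow_pos {F : ℝ⟦X⟧} (hF : ∀ n, 0 < coeff n F) {a : ℝ} (ha : 0 ≤ a) (n : ℕ) :
    0 < coeff n (F * mk (a ^ ·)) :=
  pos_of_succ_eq_mul_add (d := fun n => coeff n (F * mk (a ^ ·))) hF ha
    (coeff_zero_mul_mk_pow F a) (coeff_succ_mul_mk_pow F a) n

theorem isLogConcave_coeff_mul_mk_pow {F : ℝ⟦X⟧} (hF : ∀ n, 0 < coeff n F)
    (hlc : IsLogConcave fun n => coeff n F) {a : ℝ} (ha : 0 ≤ a) :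
    IsLogConcave fun n => coeff n (F * mk (a ^ ·)) :=
  hlc.of_succ_eq_mul_add hF ha (coeff_zero_mul_mk_pow F a) (coeff_succ_mul_mk_pow F a)

end PowerSeries

section BoseGenFun

variable {R : Type*} [CommSemiring R]

/-- `mk (a ^ ·)` is the expansion of `(1 - a X)⁻¹`, so this is `∏_{k < K} (1 - a_k X)⁻¹`. -/
noncomputable def boseGenFun (a : ℕ → R) (K : ℕ) : R⟦X⟧ :=
  ∏ k ∈ range K, mk (a k ^ ·)

theorem boseGenFun_succ (a : ℕ → R) (K : ℕ) :
    boseGenFun a (K + 1) = boseGenFun a K * mk (a K ^ ·) :=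
  prod_range_succ _ _

theorem coeff_boseGenFun (a : ℕ → R) (K n : ℕ) :
    coeff n (boseGenFun a K) =
      ∑ f ∈ finsuppAntidiag (range K) n, f.prod fun k m => a k ^ m := by
  rw [boseGenFun, coeff_prod]
  refine sum_congr rfl fun f hf => ?_
  rw [f.prod_of_support_subset (mem_finsuppAntidiag.1 hf).2 _ fun _ _ => pow_zero _]
  simp only [coeff_mk]

theorem coeff_boseGenFun_one (a : ℕ → R) (n : ℕ) : coeff n (boseGenFun a 1) = a 0 ^ n := by
  rw [boseGenFun, prod_range_one, coeff_mk]

end BoseGenFun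

theorem summable_of_sum_le_of_monotone {ι : Type*} {f : ι → ℝ} (hf : 0 ≤ f) {T : ℕ → Finset ι}
    (hT : Monotone T) (hcover : ∀ i, ∃ K, i ∈ T K) {C : ℝ} (hC : ∀ K, ∑ i ∈ T K, f i ≤ C) :
    Summable f := by
  choose K hK using hcover
  refine summable_of_sum_le (c := C) hf fun u => ?_
  have hu : u ⊆ T (u.sup K) := fun i hi => hT (le_sup hi) (hK i)
  exact (sum_le_sum_of_subset_of_nonneg hu fun i _ _ => hf i).trans (hC _)

section Real

variable {a : ℕ → ℝ}

theorem coeff_boseGenFun_le (ha : 0 ≤ a) (K n : ℕ) :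
    coeff n (boseGenFun a K) ≤ (∑ k ∈ range K, a k) ^ n := by
  induction K generalizing n with
  | zero => simp [boseGenFun, coeff_one, zero_pow_eq]
  | succ K ih =>
    have hS : 0 ≤ ∑ k ∈ range K, a k := sum_nonneg fun k _ => ha k
    rw [boseGenFun_succ, coeff_mul, Nat.sum_antidiagonal_eq_sum_range_succ
      (fun i j => coeff i (boseGenFun a K) * coeff j (mk (a K ^ ·))), sum_range_succ a K, add_pow]
    refine sum_le_sum fun i hi => ?_
    rw [coeff_mk]
    calc coeff i (boseGenFun a K) * a K ^ (n - i)
        ≤ (∑ k ∈ range K, a k) ^ i * a K ^ (n - i) := by gcongr; exacts [pow_nonneg (ha K) _, ih i]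
      _ ≤ (∑ k ∈ range K, a k) ^ i * a K ^ (n - i) * (n.choose i) := by
        refine le_mul_of_one_le_right (mul_nonneg (pow_nonneg hS _) (pow_nonneg (ha K) _)) ?_
        exact_mod_cast Nat.choose_pos (Nat.lt_succ_iff.1 (mem_range.1 hi))

theorem coeff_boseGenFun_succ_pos (ha : ∀ k, 0 < a k) (K n : ℕ) :
    0 < coeff n (boseGenFun a (K + 1)) := by
  induction K generalizing n with
  | zero => exact (coeff_boseGenFun_one a n).symm ▸ pow_pos (ha 0) n
  | succ K ih =>
    rw [boseGenFun_succ]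
    exact coeff_mul_mk_pow_pos ih (ha _).le n

theorem isLogConcave_coeff_boseGenFun_succ (ha : ∀ k, 0 < a k) (K : ℕ) :
    IsLogConcave fun n => coeff n (boseGenFun a (K + 1)) := by
  induction K with
  | zero =>
    intro n
    simp only [zero_add, coeff_boseGenFun_one]
    exact (by ring : a 0 ^ n * a 0 ^ (n + 2) = (a 0 ^ (n + 1)) ^ 2).le
  | succ K ih =>
    rw [boseGenFun_succ]
    exact isLogConcave_coeff_mul_mk_pow (coeff_boseGenFun_succ_pos ha K) ih (ha _).le

noncomputable def bosePartition (a : ℕ → ℝ) (n : ℕ) : ℝ :=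
  ∑' g : {f : ℕ →₀ ℕ // f.sum (fun _ m => m) = n}, (g : ℕ →₀ ℕ).prod fun k m => a k ^ m

def occupationsBelow (K n : ℕ) : Finset {f : ℕ →₀ ℕ // f.sum (fun _ m => m) = n} :=
  (finsuppAntidiag (range K) n).subtype _

theorem sum_occupationsBelow (a : ℕ → ℝ) (K n : ℕ) :
    ∑ g ∈ occupationsBelow K n, (g : ℕ →₀ ℕ).prod (fun k m => a k ^ m) =
      coeff n (boseGenFun a K) := by
  rw [occupationsBelow, sum_subtype_of_mem (fun f : ℕ →₀ ℕ => f.prod fun k m => a k ^ m)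
    fun f hf => (mem_finsuppAntidiag'.1 hf).1, coeff_boseGenFun]

theorem monotone_occupationsBelow (n : ℕ) : Monotone fun K => occupationsBelow K n :=
  fun _ _ h => subtype_mono (finsuppAntidiag_mono (range_subset_range.2 h) n)

theorem exists_mem_occupationsBelow {n : ℕ} (g : {f : ℕ →₀ ℕ // f.sum (fun _ m => m) = n}) :
    ∃ K, g ∈ occupationsBelow K n := by
  obtain ⟨K, hK⟩ := exists_nat_subset_range (g : ℕ →₀ ℕ).support
  exact ⟨K, mem_subtype.2 (mem_finsuppAntidiag'.2 ⟨g.2, hK⟩)⟩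

theorem summable_bosePartition (ha : 0 ≤ a) (hs : Summable a) (n : ℕ) :
    Summable fun g : {f : ℕ →₀ ℕ // f.sum (fun _ m => m) = n} =>
      (g : ℕ →₀ ℕ).prod fun k m => a k ^ m := by
  refine summable_of_sum_le_of_monotone (fun g => prod_nonneg fun k _ => pow_nonneg (ha k) _)
    (monotone_occupationsBelow n) exists_mem_occupationsBelow (C := (∑' k, a k) ^ n) fun K => ?_
  rw [sum_occupationsBelow]
  exact (coeff_boseGenFun_le ha K n).trans
    (pow_le_pow_left₀ (sum_nonneg fun k _ => ha k) (hs.sum_le_tsum _ fun k _ => ha k) n)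

theorem tendsto_coeff_boseGenFun (ha : 0 ≤ a) (hs : Summable a) (n : ℕ) :
    Tendsto (fun K => coeff n (boseGenFun a K)) atTop (𝓝 (bosePartition a n)) := by
  simp_rw [← sum_occupationsBelow]
  exact (summable_bosePartition ha hs n).hasSum.comp
    (tendsto_atTop_finset_of_monotone (monotone_occupationsBelow n) exists_mem_occupationsBelow)

theorem coeff_boseGenFun_le_bosePartition (ha : 0 ≤ a) (hs : Summable a) (K n : ℕ) :
    coeff n (boseGenFun a K) ≤ bosePartition a n := by
  rw [← sum_occupationsBelow]
  exact (summable_bosePartition ha hs n).sum_le_tsum _ fun g _ =>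
    prod_nonneg fun k _ => pow_nonneg (ha k) _

theorem bosePartition_pos (ha : ∀ k, 0 < a k) (hs : Summable a) (n : ℕ) :
    0 < bosePartition a n :=
  (coeff_boseGenFun_succ_pos ha 0 n).trans_le
    (coeff_boseGenFun_le_bosePartition (fun k => (ha k).le) hs 1 n)

theorem isLogConcave_bosePartition (ha : ∀ k, 0 < a k) (hs : Summable a) :
    IsLogConcave (bosePartition a) :=
  IsLogConcave.of_tendsto (Eventually.of_forall (isLogConcave_coeff_boseGenFun_succ ha))
    fun n => (tendsto_coeff_boseGenFun (fun k => (ha k).le) hs n).comp (tendsto_add_atTop_nat 1)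

end Real

theorem Zcan_eq_bosePartition (β : ℝ) (E : ℕ → ℝ) :
    Zcan β E = bosePartition fun k => Real.exp (-β * E k) := by
  ext n
  refine tsum_congr fun g => ?_
  rw [Finsupp.sum, mul_sum, Real.exp_sum, Finsupp.prod]
  refine prod_congr rfl fun k _ => ?_
  rw [← Real.exp_nat_mul, mul_left_comm]

theorem Zcan_log_concave_general (β : ℝ) (E : ℕ → ℝ)
    (hsum : Summable fun k => Real.exp (-β * E k)) (m : ℕ) :
    Zcan β E (m + 2) / Zcan β E (m + 1) ≤ Zcan β E (m + 1) / Zcan β E m := by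
  rw [Zcan_eq_bosePartition]
  exact (isLogConcave_bosePartition (fun k => Real.exp_pos _) hsum).div_le_div
    (bosePartition_pos (fun k => Real.exp_pos _) hsum) m

/-- Log-concavity of the canonical partition functions of the perfect Bose gas. -/
theorem Zcan_log_concave (β : ℝ) (E : ℕ → ℝ) (hβ : 0 < β)
    (hE0 : 0 < E 0) (hE01 : E 0 < E 1) (hEmono : Monotone E)
    (hsum : Summable fun k => Real.exp (-β * E k)) (m : ℕ) :
    Zcan β E (m + 2) / Zcan β E (m + 1) ≤ Zcan β E (m + 1) / Zcan β E m :=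
  Zcan_log_concave_general β E hsum m
end

section
/- In the canonical ensemble for the perfect Bose gas, the Laplace transform of the occupation number of level k satisfies the identity ⟨exp(−λN_k)⟩_V^C(n/V) = e^λ − (e^λ − 1)·Z_V(n)^{-1}·Σ_{m=0}^{n} e^{−(βE_k+λ)(n−m)} Z_V(m), for all λ ∈ ℝ and n ≥ 0. -/
/-- Canonical expectation of g(N_k) in the n-particle perfect Bose gas. -/
noncomputable def canExp (β : ℝ) (E : ℕ → ℝ) (n k : ℕ) (g : ℕ → ℝ) : ℝ :=
  (Zcan β E n)⁻¹ * ∑' f : {f : ℕ →₀ ℕ // f.sum (fun _ m => m) = n},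
    g ((f : ℕ →₀ ℕ) k) * Real.exp (-β * (f : ℕ →₀ ℕ).sum (fun j m => (m : ℝ) * E j))

open Finsupp Finset

lemma pow_eq_inv_sub_mul_sum_ite {K : Type*} [Field K] {u : K} (hu : u ≠ 0) {j n : ℕ}
    (hjn : j ≤ n) :
    u ^ j = u⁻¹ - (u⁻¹ - 1) * ∑ i ∈ range (n + 1), if i ≤ j then u ^ i else 0 := by
  have hrange : (range (n + 1)).filter (· ≤ j) = range (j + 1) := by
    ext i; simp only [mem_filter, mem_range]; omega
  rw [← sum_filter, hrange, show u⁻¹ - 1 = u⁻¹ * (1 - u) by field_simp, mul_assoc,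
    mul_neg_geom_sum, pow_succ]
  field_simp
  ring

section BoltzmannWeight

variable {α : Type*} (β : ℝ) (E : α → ℝ)

noncomputable def boltzmannWeight (f : α →₀ ℕ) : ℝ :=
  Real.exp (-β * f.sum fun a m => (m : ℝ) * E a)

lemma boltzmannWeight_pos (f : α →₀ ℕ) : 0 < boltzmannWeight β E f := Real.exp_pos _

lemma boltzmannWeight_add_single (f : α →₀ ℕ) (a : α) (i : ℕ) :
    boltzmannWeight β E (f + single a i) = Real.exp (-β * E a) ^ i * boltzmannWeight β E f := by
  rw [boltzmannWeight, boltzmannWeight, sum_add_index' (by simp) (by intros; push_cast; ring),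
    sum_single_index (by simp), ← Real.exp_nat_mul, ← Real.exp_add]
  ring_nf

lemma summable_boltzmannWeight (hsum : Summable fun a => Real.exp (-β * E a)) (n : ℕ) :
    Summable fun f : {f : α →₀ ℕ // degree f = n} => boltzmannWeight β E f := by
  induction n with
  | zero =>
    have : Subsingleton {f : α →₀ ℕ // degree f = 0} :=
      ⟨fun f g => Subtype.ext <|
        ((degree_eq_zero_iff _).1 f.2).trans ((degree_eq_zero_iff _).1 g.2).symm⟩
    exact .of_finite
  | succ n ih =>
    let addParticle : α × {f : α →₀ ℕ // degree f = n} → {f : α →₀ ℕ // degree f = n + 1} :=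
      fun p => ⟨p.2.1 + single p.1 1, by simp [p.2.2]⟩
    have hsurj : Function.Surjective addParticle := by
      rintro ⟨f, hf⟩
      obtain ⟨a, ha⟩ : ∃ a, f a ≠ 0 := by
        by_contra! h
        simp [show f = 0 from Finsupp.ext h] at hf
      have hle : single a 1 ≤ f := single_le_iff.2 (Nat.one_le_iff_ne_zero.2 ha)
      have hdeg : degree (f - single a 1) = n := by
        have := congrArg degree (tsub_add_cancel_of_le hle)
        rw [map_add, degree_single, hf] at this
        omega
      exact ⟨(a, ⟨f - single a 1, hdeg⟩), Subtype.ext (tsub_add_cancel_of_le hle)⟩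
    have hcomp : Summable fun p => boltzmannWeight β E (addParticle p).1 := by
      simp only [addParticle, boltzmannWeight_add_single, pow_one]
      exact hsum.mul_of_nonneg ih (fun _ => (Real.exp_pos _).le)
        (fun _ => (boltzmannWeight_pos β E _).le)
    simpa [Function.comp_def, Function.surjInv_eq hsurj]
      using hcomp.comp_injective (Function.injective_surjInv hsurj)

lemma tsum_ite_le_apply_boltzmannWeight (a : α) {i n : ℕ} (hin : i ≤ n) :
    ∑' f : {f : α →₀ ℕ // degree f = n}, (if i ≤ f.1 a then boltzmannWeight β E f else 0)
      = Real.exp (-β * E a) ^ i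
          * ∑' g : {g : α →₀ ℕ // degree g = n - i}, boltzmannWeight β E g := by
  let addParticles : {g : α →₀ ℕ // degree g = n - i} → {f : α →₀ ℕ // degree f = n} :=
    fun g => ⟨g.1 + single a i, by simp [g.2]; omega⟩
  have hinj : Function.Injective addParticles :=
    fun g g' h => Subtype.ext (add_right_cancel (congrArg Subtype.val h))
  have hsupp : Function.support (fun f : {f : α →₀ ℕ // degree f = n} =>
      if i ≤ f.1 a then boltzmannWeight β E f else 0) ⊆ Set.range addParticles := by
    rintro ⟨f, hf⟩ hfa
    have hle : single a i ≤ f := single_le_iff.2 (by by_contra h; simp [h] at hfa)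
    refine ⟨⟨f - single a i, ?_⟩, Subtype.ext (tsub_add_cancel_of_le hle)⟩
    have := congrArg degree (tsub_add_cancel_of_le hle)
    rw [map_add, degree_single, hf] at this
    omega
  rw [← hinj.tsum_eq hsupp, ← tsum_mul_left]
  simp [addParticles, boltzmannWeight_add_single]

lemma tsum_pow_apply_mul_boltzmannWeight
    (hsum : Summable fun a => Real.exp (-β * E a)) (a : α) (n : ℕ) {u : ℝ} (hu : u ≠ 0) :
    ∑' f : {f : α →₀ ℕ // degree f = n}, u ^ f.1 a * boltzmannWeight β E f
      = u⁻¹ * ∑' f : {f : α →₀ ℕ // degree f = n}, boltzmannWeight β E f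
        - (u⁻¹ - 1) * ∑ i ∈ range (n + 1), (u * Real.exp (-β * E a)) ^ i
            * ∑' g : {g : α →₀ ℕ // degree g = n - i}, boltzmannWeight β E g := by
  have hw := summable_boltzmannWeight β E hsum n
  have hw_nonneg (f : {f : α →₀ ℕ // degree f = n}) := (boltzmannWeight_pos β E f).le
  have hw_ite (i : ℕ) : Summable fun f : {f : α →₀ ℕ // degree f = n} =>
      if i ≤ f.1 a then boltzmannWeight β E f else 0 :=
    .of_nonneg_of_le (fun f => ite_nonneg (hw_nonneg f) le_rfl)
      (fun f => by split_ifs <;> simp [hw_nonneg]) hw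
  have hpointwise (f : {f : α →₀ ℕ // degree f = n}) :
      u ^ f.1 a * boltzmannWeight β E f = u⁻¹ * boltzmannWeight β E f
        - (u⁻¹ - 1) * ∑ i ∈ range (n + 1),
            u ^ i * if i ≤ f.1 a then boltzmannWeight β E f else 0 := by
    rw [pow_eq_inv_sub_mul_sum_ite hu (f.2 ▸ le_degree a f.1), sub_mul, mul_assoc, Finset.sum_mul]
    simp only [mul_ite, ite_mul, mul_zero, zero_mul]
  rw [tsum_congr hpointwise, Summable.tsum_sub (hw.mul_left _)
      ((summable_sum fun i _ => (hw_ite i).mul_left _).mul_left _),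
    tsum_mul_left, tsum_mul_left, Summable.tsum_finsetSum fun i _ => (hw_ite i).mul_left _]
  congr 2
  refine sum_congr rfl fun i hi => ?_
  rw [tsum_mul_left, tsum_ite_le_apply_boltzmannWeight β E a (mem_range_succ_iff.1 hi),
    mul_pow, mul_assoc]

end BoltzmannWeight

lemma Zcan_eq_tsum_boltzmannWeight (β : ℝ) (E : ℕ → ℝ) (n : ℕ) :
    Zcan β E n = ∑' f : {f : ℕ →₀ ℕ // degree f = n}, boltzmannWeight β E f := rfl

lemma canExp_eq_tsum_boltzmannWeight (β : ℝ) (E : ℕ → ℝ) (n k : ℕ) (g : ℕ → ℝ) :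
    canExp β E n k g
      = (Zcan β E n)⁻¹ * ∑' f : {f : ℕ →₀ ℕ // degree f = n}, g (f.1 k) * boltzmannWeight β E f :=
  rfl

lemma Zcan_pos (β : ℝ) (E : ℕ → ℝ) (hsum : Summable fun k => Real.exp (-β * E k)) (n : ℕ) :
    0 < Zcan β E n :=
  (summable_boltzmannWeight β E hsum n).tsum_pos (fun f => (boltzmannWeight_pos β E f).le)
    ⟨single 0 n, degree_single 0 n⟩ (boltzmannWeight_pos β E _)

theorem canExp_laplace_identity_general (β : ℝ) (E : ℕ → ℝ)
    (hsum : Summable fun k => Real.exp (-β * E k)) (n k : ℕ) (lam : ℝ) :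
    canExp β E n k (fun m => Real.exp (-lam * m)) =
      Real.exp lam - (Real.exp lam - 1) * (Zcan β E n)⁻¹ *
        ∑ m ∈ Finset.range (n + 1),
          Real.exp (-(β * E k + lam) * ((n : ℝ) - (m : ℝ))) * Zcan β E m := by
  have hexp (m : ℕ) : Real.exp (-lam * m) = Real.exp (-lam) ^ m := by
    rw [← Real.exp_nat_mul, mul_comm]
  have hreflect : ∑ m ∈ range (n + 1),
        Real.exp (-(β * E k + lam) * ((n : ℝ) - (m : ℝ))) * Zcan β E m
      = ∑ i ∈ range (n + 1), (Real.exp (-lam) * Real.exp (-β * E k)) ^ i * Zcan β E (n - i) := by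
    rw [← sum_range_reflect]
    refine sum_congr rfl fun i hi => ?_
    rw [Nat.add_sub_cancel,
      Nat.cast_sub (mem_range_succ_iff.1 hi), sub_sub_cancel, ← Real.exp_add,
      ← Real.exp_nat_mul]
    ring_nf
  simp only [canExp_eq_tsum_boltzmannWeight, hexp]
  rw [tsum_pow_apply_mul_boltzmannWeight β E hsum k n (Real.exp_pos _).ne', hreflect,
    Real.exp_neg, inv_inv]
  simp only [← Zcan_eq_tsum_boltzmannWeight]
  field_simp [(Zcan_pos β E hsum n).ne']

/-- The canonical Laplace transform identity for the occupation number of level k. -/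
theorem canExp_laplace_identity (β : ℝ) (E : ℕ → ℝ) (hβ : 0 < β)
    (hE0 : 0 < E 0) (hE01 : E 0 < E 1) (hEmono : Monotone E)
    (hsum : Summable fun k => Real.exp (-β * E k)) (n k : ℕ) (lam : ℝ) :
    canExp β E n k (fun m => Real.exp (-lam * m)) =
      Real.exp lam - (Real.exp lam - 1) * (Zcan β E n)⁻¹ *
        ∑ m ∈ Finset.range (n + 1),
          Real.exp (-(β * E k + lam) * ((n : ℝ) - (m : ℝ))) * Zcan β E m :=
  canExp_laplace_identity_general β E hsum n k lam
end

section
/- For fixed k and fixed V, the canonical expectation ⟨exp(−λN_k)⟩_V^C(n/V) of the perfect Bose gas is monotonically decreasing in n for each λ > 0; i.e. ⟨exp(−λN_k)⟩ at n+1 particles is ≤ that at n particles. -/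
/-!
Write `q i = exp (-β E i)` and `T_y A n = ∑_{j ≤ n} y ^ j A (n - j)` (`geomConv y A n`).
Splitting off the occupation `j` of mode `k`, the partition function is `Z = T_{q k} A`, where
`A` is the partition function of the gas without mode `k`, and the numerator of
`⟨exp (-λ N_k)⟩` is `T_x A` with `x = exp (-λ) q k`. For `c = exp λ` one has
`T_x A = c T_{c x} A - (c - 1) T_x (T_{c x} A)`, so the expectation is
`c - (c - 1) T_x Z n / Z n`, and `T_x Z n / Z n` increases with `n` term by term as soon as `Z`
is log-concave. Convolution with a geometric sequence preserves log-concavity, so adding the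
modes one at a time shows that the partition function of finitely many modes is log-concave,
and so is every partition function, `A` included, as a limit of these.
-/

open Finset Filter Topology

noncomputable def geomConv (y : ℝ) (A : ℕ → ℝ) (n : ℕ) : ℝ :=
  ∑ j ∈ range (n + 1), y ^ j * A (n - j)

theorem geomConv_zero (y : ℝ) (A : ℕ → ℝ) : geomConv y A 0 = A 0 := by
  simp [geomConv]

theorem geomConv_succ (y : ℝ) (A : ℕ → ℝ) (n : ℕ) :
    geomConv y A (n + 1) = y * geomConv y A n + A (n + 1) := by
  rw [geomConv, sum_range_succ', geomConv, mul_sum]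
  simp [pow_succ, mul_assoc, mul_left_comm]

theorem geomConv_nonneg {y : ℝ} {A : ℕ → ℝ} (hy : 0 ≤ y) (hA : ∀ n, 0 ≤ A n) (n : ℕ) :
    0 ≤ geomConv y A n :=
  sum_nonneg fun j _ => mul_nonneg (pow_nonneg hy j) (hA _)

/-- With `c = exp λ` and `x = exp (-λ) q k` this is the paper's formula
`⟨exp (-λ N_k)⟩ = e^λ - (e^λ - 1) Z(n)⁻¹ ∑_{m ≤ n} e^{-(β E_k + λ)(n - m)} Z(m)`. -/
theorem geomConv_eq_mul_sub (x c : ℝ) (A : ℕ → ℝ) (n : ℕ) :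
    geomConv x A n = c * geomConv (c * x) A n - (c - 1) * geomConv x (geomConv (c * x) A) n := by
  induction n with
  | zero => simp only [geomConv_zero]; ring
  | succ n ih =>
    rw [geomConv_succ, geomConv_succ, geomConv_succ, ih, geomConv_succ (c * x)]
    ring

/-- For sequences with internal zeros this is stronger than `Z (n - 1) * Z (n + 1) ≤ Z n ^ 2`;
it is the form that convolution with a geometric sequence preserves. -/
structure IsLogConcave_s7 (Z : ℕ → ℝ) : Prop where
  nonneg : ∀ n, 0 ≤ Z n
  mul_succ_le : ∀ ⦃a b⦄, a ≤ b → Z a * Z (b + 1) ≤ Z (a + 1) * Z b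

section LogConcave

variable {Z : ℕ → ℝ}

theorem IsLogConcave_s7.mul_add_le (hZ : IsLogConcave_s7 Z) (t : ℕ) :
    ∀ ⦃p r⦄, p ≤ r → Z p * Z (r + t) ≤ Z (p + t) * Z r := by
  induction t with
  | zero => intro p r _; rw [add_zero, add_zero, mul_comm]
  | succ t ih =>
    intro p r hpr
    rcases hpr.eq_or_lt with rfl | hlt
    · rw [mul_comm]
    calc Z p * Z (r + t + 1) ≤ Z (p + 1) * Z (r + t) := hZ.mul_succ_le (by omega)
      _ ≤ Z (p + 1 + t) * Z r := ih hlt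
      _ = Z (p + (t + 1)) * Z r := by rw [add_right_comm, add_assoc]

theorem isLogConcave_geomConv {y : ℝ} (hy : 0 ≤ y) (hZ : IsLogConcave_s7 Z) :
    IsLogConcave_s7 (geomConv y Z) where
  nonneg := geomConv_nonneg hy hZ.nonneg
  mul_succ_le a b hab := by
    have key : Z (b + 1) * geomConv y Z a ≤ Z (a + 1) * geomConv y Z b :=
      calc Z (b + 1) * geomConv y Z a
          = ∑ j ∈ range (a + 1), y ^ j * (Z (a - j) * Z (b - j + (j + 1))) := by
            rw [geomConv, mul_sum]
            refine sum_congr rfl fun j hj => ?_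
            rw [show b - j + (j + 1) = b + 1 by have := mem_range.1 hj; omega]
            ring
        _ ≤ ∑ j ∈ range (a + 1), y ^ j * (Z (a + 1) * Z (b - j)) := by
            refine sum_le_sum fun j hj => mul_le_mul_of_nonneg_left ?_ (pow_nonneg hy j)
            have hja := mem_range.1 hj
            calc Z (a - j) * Z (b - j + (j + 1)) ≤ Z (a - j + (j + 1)) * Z (b - j) :=
                  hZ.mul_add_le (j + 1) (by omega)
              _ = Z (a + 1) * Z (b - j) := by rw [show a - j + (j + 1) = a + 1 by omega]
        _ ≤ ∑ j ∈ range (b + 1), y ^ j * (Z (a + 1) * Z (b - j)) :=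
            sum_le_sum_of_subset_of_nonneg (range_subset_range.2 (by omega)) fun j _ _ =>
              mul_nonneg (pow_nonneg hy j) (mul_nonneg (hZ.nonneg _) (hZ.nonneg _))
        _ = Z (a + 1) * geomConv y Z b := by
            rw [geomConv, mul_sum]
            exact sum_congr rfl fun j _ => by ring
    rw [geomConv_succ, geomConv_succ]
    nlinarith [key]

theorem IsLogConcave_s7.geomConv_mul_succ_le {x : ℝ} (hx : 0 ≤ x) (hZ : IsLogConcave_s7 Z) (n : ℕ) :
    geomConv x Z n * Z (n + 1) ≤ geomConv x Z (n + 1) * Z n := by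
  rw [geomConv, geomConv, sum_mul, sum_mul, sum_range_succ _ (n + 1)]
  refine le_add_of_le_of_nonneg (sum_le_sum fun j hj => ?_) ?_
  · have hjn := mem_range.1 hj
    rw [mul_assoc, mul_assoc, show n + 1 - j = n - j + 1 by omega]
    exact mul_le_mul_of_nonneg_left (hZ.mul_succ_le (by omega)) (pow_nonneg hx j)
  · exact mul_nonneg (mul_nonneg (pow_nonneg hx _) (hZ.nonneg _)) (hZ.nonneg _)

theorem IsLogConcave_s7.geomConv_succ_mul_le {x c : ℝ} (hx : 0 ≤ x) (hc : 1 ≤ c)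
    (hZ : IsLogConcave_s7 Z) (n : ℕ) :
    geomConv x Z (n + 1) * geomConv (c * x) Z n ≤ geomConv x Z n * geomConv (c * x) Z (n + 1) := by
  have hV := (isLogConcave_geomConv (mul_nonneg (by linarith) hx) hZ).geomConv_mul_succ_le hx n
  rw [geomConv_eq_mul_sub x c Z (n + 1), geomConv_eq_mul_sub x c Z n]
  nlinarith [mul_le_mul_of_nonneg_left hV (sub_nonneg.2 hc)]

theorem IsLogConcave_s7.of_tendsto {ι : Type*} {l : Filter ι} [l.NeBot] {Zs : ι → ℕ → ℝ}
    (hZs : ∀ i, IsLogConcave_s7 (Zs i)) (hlim : ∀ n, Tendsto (Zs · n) l (𝓝 (Z n))) :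
    IsLogConcave_s7 Z where
  nonneg n := ge_of_tendsto' (hlim n) fun i => (hZs i).nonneg n
  mul_succ_le a b hab :=
    le_of_tendsto_of_tendsto' ((hlim a).mul (hlim (b + 1))) ((hlim (a + 1)).mul (hlim b))
      fun i => (hZs i).mul_succ_le hab

end LogConcave

theorem Function.update_nonneg {ι α : Type*} [DecidableEq ι] [Preorder α] [Zero α] {f : ι → α}
    (hf : 0 ≤ f) (i : ι) {a : α} (ha : 0 ≤ a) : 0 ≤ Function.update f i a :=
  le_update_iff.2 ⟨ha, fun j _ => hf j⟩

namespace BoseGas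

/-- `f.degree` is definitionally the particle number `f.sum fun _ m => m` used in `Zcan`. -/
abbrev Occupations (n : ℕ) : Type := {f : ℕ →₀ ℕ // f.degree = n}

instance : Subsingleton (Occupations 0) :=
  ⟨fun f g => Subtype.ext <| by
    rw [(Finsupp.degree_eq_zero_iff _).1 f.2, (Finsupp.degree_eq_zero_iff _).1 g.2]⟩

theorem Occupations.exists_ne_zero {n : ℕ} (f : Occupations (n + 1)) :
    ∃ i, (f : ℕ →₀ ℕ) i ≠ 0 := by
  by_contra! h
  have hf := f.2
  rw [show (f : ℕ →₀ ℕ) = 0 from Finsupp.ext h, map_zero] at hf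
  omega

theorem Occupations.exists_add_single {n i : ℕ} (f : Occupations (n + 1))
    (hi : (f : ℕ →₀ ℕ) i ≠ 0) :
    ∃ g : Occupations n, (g : ℕ →₀ ℕ) + Finsupp.single i 1 = (f : ℕ →₀ ℕ) := by
  have hadd : (f : ℕ →₀ ℕ) - Finsupp.single i 1 + Finsupp.single i 1 = (f : ℕ →₀ ℕ) :=
    tsub_add_cancel_of_le (Finsupp.single_le_iff.2 (Nat.one_le_iff_ne_zero.2 hi))
  refine ⟨⟨_, ?_⟩, hadd⟩
  have h := congrArg Finsupp.degree hadd
  rw [map_add, Finsupp.degree_single, f.2] at h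
  omega

noncomputable def weight (q : ℕ → ℝ) (f : ℕ →₀ ℕ) : ℝ := f.prod fun i m => q i ^ m

noncomputable def partitionFn (q : ℕ → ℝ) (n : ℕ) : ℝ := ∑' f : Occupations n, weight q f

variable {q : ℕ → ℝ}

theorem weight_nonneg (hq : 0 ≤ q) (f : ℕ →₀ ℕ) : 0 ≤ weight q f :=
  prod_nonneg fun i _ => pow_nonneg (hq i) _

theorem weight_mono {q' : ℕ → ℝ} (hq : 0 ≤ q) (hqq' : q ≤ q') (f : ℕ →₀ ℕ) :
    weight q f ≤ weight q' f :=
  prod_le_prod (fun i _ => pow_nonneg (hq i) _) fun i _ => pow_le_pow_left₀ (hq i) (hqq' i) _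

theorem weight_congr {q' : ℕ → ℝ} {f : ℕ →₀ ℕ} (h : ∀ i ∈ f.support, q i = q' i) :
    weight q f = weight q' f :=
  Finsupp.prod_congr fun i hi => by rw [h i hi]

theorem weight_zero (q : ℕ → ℝ) : weight q 0 = 1 := Finsupp.prod_zero_index

theorem weight_add (q : ℕ → ℝ) (f g : ℕ →₀ ℕ) : weight q (f + g) = weight q f * weight q g :=
  Finsupp.prod_add_index' (fun i => pow_zero (q i)) fun i => pow_add (q i)

theorem weight_single (q : ℕ → ℝ) (i m : ℕ) : weight q (Finsupp.single i m) = q i ^ m :=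
  Finsupp.prod_single_index (pow_zero (q i))

theorem weight_update (q : ℕ → ℝ) (k : ℕ) (a : ℝ) (f : ℕ →₀ ℕ) :
    weight (Function.update q k a) f = weight q (f.erase k) * a ^ f k := by
  conv_lhs => rw [← Finsupp.erase_add_single k f]
  rw [weight_add, weight_single, Function.update_self]
  congr 1
  exact weight_congr fun i hi => Function.update_of_ne (by rintro rfl; simp at hi) _ _

theorem weight_update_zero (q : ℕ → ℝ) (k : ℕ) (f : ℕ →₀ ℕ) :
    weight (Function.update q k 0) f = if f k = 0 then weight q f else 0 := by
  conv_rhs => rw [← Function.update_eq_self k q]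
  rw [weight_update, weight_update]
  split_ifs with h <;> simp [h]

theorem weight_update_mul (q : ℕ → ℝ) (k : ℕ) (r : ℝ) (f : ℕ →₀ ℕ) :
    weight (Function.update q k (r * q k)) f = r ^ f k * weight q f := by
  conv_rhs => rw [← Function.update_eq_self k q]
  rw [weight_update, weight_update, mul_pow]
  ring

/-- Removing a particle from an occupied mode `i` injects `Occupations (n + 1)` into
`ℕ × Occupations n` and splits off a factor `q i` of the weight. -/
theorem summable_weight (hq0 : 0 ≤ q) (hq : Summable q) :
    ∀ n, Summable fun f : Occupations n => weight q f
  | 0 => .of_finite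
  | n + 1 => by
    choose i hi using Occupations.exists_ne_zero (n := n)
    choose remove hremove using fun f => Occupations.exists_add_single f (hi f)
    have hinj : Function.Injective fun f => (i f, remove f) := fun f g hfg => by
      simp only [Prod.mk.injEq] at hfg
      rw [Subtype.ext_iff, ← hremove f, ← hremove g, hfg.1, hfg.2]
    refine ((hq.mul_of_nonneg (summable_weight hq0 hq n) hq0 fun f => weight_nonneg hq0 _)
      |>.comp_injective hinj).congr fun f => ?_
    rw [Function.comp_apply, ← hremove f, weight_add, weight_single, pow_one, mul_comm]

theorem partitionFn_nonneg (hq : 0 ≤ q) (n : ℕ) : 0 ≤ partitionFn q n :=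
  tsum_nonneg fun f => weight_nonneg hq f

theorem partitionFn_zero (q : ℕ → ℝ) : partitionFn q 0 = 1 := by
  rw [partitionFn, tsum_eq_single ⟨0, map_zero _⟩ fun f hf => absurd (Subsingleton.elim _ _) hf,
    weight_zero]

theorem partitionFn_zero_weights_succ (n : ℕ) : partitionFn 0 (n + 1) = 0 := by
  refine (tsum_congr fun f => ?_).trans tsum_zero
  obtain ⟨i, hi⟩ := Occupations.exists_ne_zero f
  rw [← Function.update_eq_self i (0 : ℕ → ℝ), Pi.zero_apply, weight_update_zero, if_neg hi]

/-- Configurations with mode `k` empty carry the weight of `update q k 0`; the others are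
`g + single k 1` for an arbitrary configuration `g` of `n` particles. -/
theorem partitionFn_succ (hq0 : 0 ≤ q) (hq : Summable q) (k n : ℕ) :
    partitionFn q (n + 1) =
      q k * partitionFn q n + partitionFn (Function.update q k 0) (n + 1) := by
  let occupied (f : ℕ →₀ ℕ) : ℝ := if f k = 0 then 0 else weight q f
  have hsplit (f : ℕ →₀ ℕ) : weight q f = occupied f + weight (Function.update q k 0) f := by
    rw [weight_update_zero]
    split_ifs <;> simp [occupied, *]
  have hocc : Summable fun f : Occupations (n + 1) => occupied f :=
    (summable_weight hq0 hq (n + 1)).of_nonneg_of_le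
      (fun f => by dsimp only [occupied]; split_ifs <;> simp [weight_nonneg hq0])
      (fun f => by dsimp only [occupied]; split_ifs <;> simp [weight_nonneg hq0])
  have hfree : Summable fun f : Occupations (n + 1) => weight (Function.update q k 0) f :=
    summable_weight (Function.update_nonneg hq0 k le_rfl) (hq.update k 0) (n + 1)
  let addParticle (g : Occupations n) : Occupations (n + 1) :=
    ⟨(g : ℕ →₀ ℕ) + Finsupp.single k 1, by rw [map_add, Finsupp.degree_single, g.2]⟩
  have hinj : Function.Injective addParticle := fun g h hgh =>
    Subtype.ext (add_right_cancel (congrArg Subtype.val hgh))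
  have hrange : Function.support (fun f : Occupations (n + 1) => occupied f) ⊆
      Set.range addParticle := fun f hf =>
    have ⟨g, hg⟩ := Occupations.exists_add_single f fun h => hf (if_pos h)
    ⟨g, Subtype.ext hg⟩
  have hocc_eq : ∑' f : Occupations (n + 1), occupied f = q k * partitionFn q n := by
    rw [← hinj.tsum_eq hrange, partitionFn, ← tsum_mul_left]
    refine tsum_congr fun g => ?_
    simp [occupied, addParticle, weight_add, weight_single, mul_comm]
  rw [partitionFn, tsum_congr fun f : Occupations (n + 1) => hsplit f, hocc.tsum_add hfree, hocc_eq]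
  rfl

theorem partitionFn_eq_geomConv (hq0 : 0 ≤ q) (hq : Summable q) (k n : ℕ) :
    partitionFn q n = geomConv (q k) (partitionFn (Function.update q k 0)) n := by
  induction n with
  | zero => rw [geomConv_zero, partitionFn_zero, partitionFn_zero]
  | succ n ih => rw [partitionFn_succ hq0 hq k, ih, geomConv_succ]

theorem partitionFn_pos (hq0 : 0 ≤ q) (hq : Summable q) {i : ℕ} (hi : 0 < q i) (n : ℕ) :
    0 < partitionFn q n :=
  calc 0 < q i ^ n := pow_pos hi n
    _ = weight q (Finsupp.single i n) := (weight_single q i n).symm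
    _ ≤ partitionFn q n := (summable_weight hq0 hq n).le_tsum ⟨_, Finsupp.degree_single i n⟩
        fun f _ => weight_nonneg hq0 f

theorem tendsto_partitionFn_indicator (hq0 : 0 ≤ q) (hq : Summable q) (n : ℕ) :
    Tendsto (fun N => partitionFn ((Set.Iio N).indicator q) n) atTop (𝓝 (partitionFn q n)) := by
  refine tendsto_tsum_of_dominated_convergence (summable_weight hq0 hq n) (fun f => ?_)
    (.of_forall fun N f => ?_)
  · refine tendsto_const_nhds.congr' (eventually_atTop.2 ⟨(f : ℕ →₀ ℕ).support.sup id + 1,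
      fun N hN => weight_congr fun i hi => (Set.indicator_of_mem ?_ q).symm⟩)
    have := le_sup (f := id) hi
    exact Set.mem_Iio.2 (by simp only [id] at this; omega)
  · rw [Real.norm_of_nonneg (weight_nonneg (Set.indicator_nonneg fun i _ => hq0 i) _)]
    exact weight_mono (Set.indicator_nonneg fun i _ => hq0 i)
      (Set.indicator_le_self' fun i _ => hq0 i) _

theorem isLogConcave_partitionFn_indicator (hq0 : 0 ≤ q) (hq : Summable q) :
    ∀ N, IsLogConcave_s7 (partitionFn ((Set.Iio N).indicator q))
  | 0 => by
    rw [show (Set.Iio 0).indicator q = 0 by ext; simp]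
    exact ⟨partitionFn_nonneg le_rfl, fun a b _ => by
      rw [partitionFn_zero_weights_succ, mul_zero]
      exact mul_nonneg (partitionFn_nonneg le_rfl _) (partitionFn_nonneg le_rfl _)⟩
  | N + 1 => by
    have hupdate :
        Function.update ((Set.Iio (N + 1)).indicator q) N 0 = (Set.Iio N).indicator q := by
      ext i
      by_cases hi : i = N
      · simp [hi]
      · simp [Set.indicator_apply, hi, Nat.le_iff_lt_or_eq]
    have hq0' : 0 ≤ (Set.Iio (N + 1)).indicator q := Set.indicator_nonneg fun i _ => hq0 i
    rw [funext (partitionFn_eq_geomConv hq0' (hq.indicator _) N), hupdate]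
    exact isLogConcave_geomConv (hq0' N) (isLogConcave_partitionFn_indicator hq0 hq N)

theorem isLogConcave_partitionFn (hq0 : 0 ≤ q) (hq : Summable q) :
    IsLogConcave_s7 (partitionFn q) :=
  .of_tendsto (isLogConcave_partitionFn_indicator hq0 hq) (tendsto_partitionFn_indicator hq0 hq)

theorem exp_neg_mul_sum_eq_weight (β : ℝ) (E : ℕ → ℝ) (f : ℕ →₀ ℕ) :
    Real.exp (-β * f.sum fun j m => (m : ℝ) * E j) = weight (fun i => Real.exp (-β * E i)) f := by
  rw [weight, Finsupp.prod, Finsupp.sum, mul_sum, Real.exp_sum]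
  refine prod_congr rfl fun i _ => ?_
  rw [← Real.exp_nat_mul]
  ring_nf

theorem canExp_exp_neg_mul (β : ℝ) (E : ℕ → ℝ) (n k : ℕ) (lam : ℝ) :
    canExp β E n k (fun m => Real.exp (-lam * m)) =
      (partitionFn (fun i => Real.exp (-β * E i)) n)⁻¹ *
        partitionFn (Function.update (fun i => Real.exp (-β * E i)) k
          (Real.exp (-lam) * Real.exp (-β * E k))) n := by
  have hZ : Zcan β E n = partitionFn (fun i => Real.exp (-β * E i)) n :=
    tsum_congr fun f : Occupations n => exp_neg_mul_sum_eq_weight β E f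
  rw [canExp, hZ]
  congr 1
  refine tsum_congr fun f : Occupations n => ?_
  rw [weight_update_mul, exp_neg_mul_sum_eq_weight, ← Real.exp_nat_mul, mul_comm (-lam)]

end BoseGas

open BoseGas

theorem canExp_laplace_antitone_general (β : ℝ) (E : ℕ → ℝ)
    (hsum : Summable fun k => Real.exp (-β * E k)) (k : ℕ) (lam : ℝ) (hlam : 0 < lam)
    (n : ℕ) :
    canExp β E (n + 1) k (fun m => Real.exp (-lam * m)) ≤
      canExp β E n k (fun m => Real.exp (-lam * m)) := by
  set q : ℕ → ℝ := fun i => Real.exp (-β * E i)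
  set A := partitionFn (Function.update q k 0)
  have hq0 : 0 ≤ q := fun i => (Real.exp_pos _).le
  have hZ (m : ℕ) : partitionFn q m = geomConv (Real.exp lam * (Real.exp (-lam) * q k)) A m := by
    rw [← mul_assoc, ← Real.exp_add, add_neg_cancel, Real.exp_zero, one_mul]
    exact partitionFn_eq_geomConv hq0 hsum k m
  have hN (m : ℕ) : partitionFn (Function.update q k (Real.exp (-lam) * q k)) m =
      geomConv (Real.exp (-lam) * q k) A m := by
    rw [partitionFn_eq_geomConv (Function.update_nonneg hq0 k (by positivity)) (hsum.update k _) k,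
      Function.update_self, Function.update_idem]
  have hpos (m : ℕ) := partitionFn_pos hq0 hsum (Real.exp_pos (-β * E 0)) m
  have hA : IsLogConcave_s7 A :=
    isLogConcave_partitionFn (Function.update_nonneg hq0 k le_rfl) (hsum.update k 0)
  rw [canExp_exp_neg_mul, canExp_exp_neg_mul, inv_mul_eq_div, inv_mul_eq_div,
    div_le_div_iff₀ (hpos (n + 1)) (hpos n), hN, hN, hZ, hZ]
  exact hA.geomConv_succ_mul_le (by positivity) (Real.one_le_exp hlam.le) n

/-- For fixed k, V and λ > 0 the canonical expectation ⟨exp(-λN_k)⟩ is monotonically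
decreasing in the particle number n. -/
theorem canExp_laplace_antitone (β : ℝ) (E : ℕ → ℝ) (hβ : 0 < β)
    (hE0 : 0 < E 0) (hE01 : E 0 < E 1) (hEmono : Monotone E)
    (hsum : Summable fun k => Real.exp (-β * E k)) (k : ℕ) (lam : ℝ) (hlam : 0 < lam)
    (n : ℕ) :
    canExp β E (n + 1) k (fun m => Real.exp (-lam * m)) ≤
      canExp β E n k (fun m => Real.exp (-lam * m)) :=
  canExp_laplace_antitone_general β E hsum k lam hlam n
end

section
/- For fixed k, fixed V and every integer r ≥ 1, the canonical moments ⟨N_k^r⟩_V^C(n/V) of the perfect Bose gas are monotonically increasing in the particle number n. -/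
/-!
Weight an occupation sequence `f` by `∏ j, x j ^ f j` with `x j = exp (-β E j)`. Removing `m`
particles from mode `k` is a bijection onto the configurations of `n - m` particles, so the
canonical tail probabilities are `P_n(N_k ≥ m) = x k ^ m Z(n - m) / Z(n)`. The partition
functions `Z` form a PF₂ (log-concave) sequence: adding one mode convolves `Z` with a geometric
sequence, which preserves PF₂, and the general case is a monotone limit over finitely many modes.
Hence `Z(n - m) / Z(n)` increases with `n`: the occupation `N_k` is stochastically increasing in
`n`, and so is the expectation of every nondecreasing function of `N_k`, such as `N_k ^ r`.
-/

open scoped ENNReal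
open Finset

lemma Monotone.eq_add_sum_range_tsub {G : ℕ → ℝ≥0∞} (hG : Monotone G) (t : ℕ) :
    G t = G 0 + ∑ m ∈ range t, (G (m + 1) - G m) := by
  induction t with
  | zero => simp
  | succ t ih =>
    rw [sum_range_succ, ← add_assoc, ← ih, add_tsub_cancel_of_le (hG t.le_succ)]

lemma tsum_mul_le_tsum_mul_of_tail_le {α : Type*} {p q : α → ℝ≥0∞} (N : α → ℕ)
    (h : ∀ m, ∑' a, (if m ≤ N a then p a else 0) ≤ ∑' a, (if m ≤ N a then q a else 0))
    {G : ℕ → ℝ≥0∞} (hG : Monotone G) :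
    ∑' a, G (N a) * p a ≤ ∑' a, G (N a) * q a := by
  have layer_cake (r : α → ℝ≥0∞) : ∑' a, G (N a) * r a =
      G 0 * ∑' a, r a + ∑' m, (G (m + 1) - G m) * ∑' a, (if m + 1 ≤ N a then r a else 0) := by
    simp_rw [← ENNReal.tsum_mul_left]
    rw [ENNReal.tsum_comm, ← ENNReal.tsum_add]
    refine tsum_congr fun a => ?_
    rw [hG.eq_add_sum_range_tsub (N a), add_mul, sum_mul,
      tsum_eq_sum (s := range (N a)) fun m hm => by simp_all]
    refine congrArg _ (sum_congr rfl fun m hm => ?_)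
    rw [if_pos (show m + 1 ≤ N a from mem_range.mp hm)]
  have h0 := h 0
  simp only [zero_le, if_true] at h0
  rw [layer_cake p, layer_cake q]
  exact add_le_add (mul_le_mul' le_rfl h0)
    (ENNReal.tsum_le_tsum fun m => mul_le_mul' le_rfl (h (m + 1)))

/-- `a` is a Pólya frequency sequence of order two: the `2 × 2` minors of the Toeplitz matrix
`(a (j - i))` are nonnegative. For positive sequences this is log-concavity. -/
def IsPF2 {R : Type*} [Mul R] [LE R] (a : ℕ → R) : Prop :=
  ∀ ⦃l i : ℕ⦄ (d : ℕ), l ≤ i → a l * a (i + d) ≤ a (l + d) * a i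

section PF2

variable {R : Type*} [CommSemiring R] [PartialOrder R] [CanonicallyOrderedAdd R] {a c : ℕ → R}

lemma isPF2_of_forall_succ_eq_zero (ha : ∀ n, a (n + 1) = 0) : IsPF2 a := by
  intro l i d hli
  rcases Nat.eq_zero_or_eq_succ_pred (i + d) with h | h
  · obtain ⟨rfl, rfl⟩ : i = 0 ∧ d = 0 := by omega
    obtain rfl : l = 0 := by omega
    rfl
  · rw [h, ha, mul_zero]
    exact zero_le

/-- The hypotheses say that `c` is the convolution of `a` with the geometric sequence `(y ^ n)`. -/
lemma IsPF2.of_succ_eq_add_mul (ha : IsPF2 a) {y : R} (hc0 : c 0 = a 0)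
    (hc : ∀ n, c (n + 1) = a (n + 1) + y * c n) : IsPF2 c := by
  have a_le_c : ∀ n, a n ≤ c n
    | 0 => hc0.ge
    | n + 1 => (hc n).ge.trans' le_self_add
  have cross : ∀ l i d, l ≤ i → c l * a (i + d + 1) ≤ a (l + d + 1) * c i := by
    intro l
    induction l with
    | zero =>
      intro i d _
      calc c 0 * a (i + d + 1) = a 0 * a (i + (d + 1)) := by rw [hc0, add_assoc]
        _ ≤ a (0 + (d + 1)) * a i := ha (d + 1) (Nat.zero_le i)
        _ ≤ a (0 + d + 1) * c i := mul_le_mul' le_rfl (a_le_c i)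
    | succ l ih =>
      rintro (_ | j) d hlj
      · omega
      calc c (l + 1) * a (j + 1 + d + 1)
          = a (l + 1) * a (j + 1 + (d + 1)) + y * (c l * a (j + (d + 1) + 1)) := by
            rw [hc]; ring_nf
        _ ≤ a (l + 1 + (d + 1)) * a (j + 1) + y * (a (l + (d + 1) + 1) * c j) :=
            add_le_add (ha (d + 1) hlj) (mul_le_mul' le_rfl (ih j (d + 1) (by omega)))
        _ = a (l + 1 + d + 1) * c (j + 1) := by rw [hc]; ring_nf
  intro l i d hli
  induction d with
  | zero => rw [add_zero, add_zero]
  | succ d ih =>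
    calc c l * c (i + (d + 1)) = c l * a (i + d + 1) + y * (c l * c (i + d)) := by
          rw [← add_assoc, hc]; ring
      _ ≤ a (l + d + 1) * c i + y * (c (l + d) * c i) :=
          add_le_add (cross l i d hli) (mul_le_mul' le_rfl ih)
      _ = c (l + (d + 1)) * c i := by rw [← add_assoc, hc]; ring

end PF2

lemma isPF2_iSup {κ : Type*} [Preorder κ] [IsDirectedOrder κ] {A : κ → ℕ → ℝ≥0∞}
    (hA : Monotone A) (h : ∀ s, IsPF2 (A s)) : IsPF2 fun n => ⨆ s, A s n := by
  intro l i d hli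
  rw [ENNReal.iSup_mul]
  refine iSup_le fun s => ?_
  rw [ENNReal.mul_iSup]
  refine iSup_le fun t => ?_
  obtain ⟨u, hsu, htu⟩ := directed_of (· ≤ ·) s t
  calc A s l * A t (i + d) ≤ A u l * A u (i + d) := mul_le_mul' (hA hsu l) (hA htu _)
    _ ≤ A u (l + d) * A u i := h u d hli
    _ ≤ (⨆ s, A s (l + d)) * ⨆ s, A s i := mul_le_mul' (le_iSup (A · _) u) (le_iSup (A · _) u)

noncomputable section

namespace PerfectBoseGas

open Finsupp

variable {ι : Type*} (x : ι → ℝ≥0∞)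

def weight (f : ι →₀ ℕ) : ℝ≥0∞ := f.prod fun j m => x j ^ m

def partitionFn (n : ℕ) : ℝ≥0∞ := ∑' f : ι →₀ ℕ, if f.degree = n then weight x f else 0

lemma weight_add (f g : ι →₀ ℕ) : weight x (f + g) = weight x f * weight x g :=
  prod_add_index' (fun _ => pow_zero _) fun _ => pow_add _

lemma weight_single (k : ι) (m : ℕ) : weight x (single k m) = x k ^ m :=
  prod_single_index (pow_zero _)

lemma weight_mono {x y : ι → ℝ≥0∞} (hxy : x ≤ y) (f : ι →₀ ℕ) : weight x f ≤ weight y f :=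
  Finset.prod_le_prod' fun j _ => pow_le_pow_left' (hxy j) _

lemma weight_update_zero [DecidableEq ι] (k : ι) (f : ι →₀ ℕ) :
    weight (Function.update x k 0) f = if f k = 0 then weight x f else 0 := by
  split_ifs with hk
  · refine Finset.prod_congr rfl fun j hj => ?_
    dsimp only
    rw [Function.update_of_ne (by rintro rfl; exact (mem_support_iff.mp hj) hk)]
  · refine Finset.prod_eq_zero (mem_support_iff.mpr hk) ?_
    dsimp only
    rw [Function.update_self, zero_pow hk]

lemma weight_indicator {s : Set ι} {f : ι →₀ ℕ} (hf : ↑f.support ⊆ s) :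
    weight (s.indicator x) f = weight x f :=
  Finset.prod_congr rfl fun j hj => by dsimp only; rw [Set.indicator_of_mem (hf hj)]

lemma partitionFn_zero : partitionFn x 0 = 1 := by
  rw [partitionFn, tsum_eq_single 0 fun f hf => if_neg (by rwa [degree_eq_zero_iff])]
  simp [weight]

lemma pow_le_partitionFn (k : ι) (n : ℕ) : x k ^ n ≤ partitionFn x n := by
  calc x k ^ n = if (single k n).degree = n then weight x (single k n) else 0 := by
        rw [degree_single, if_pos rfl, weight_single]
    _ ≤ partitionFn x n := ENNReal.le_tsum _

lemma partitionFn_mono {x y : ι → ℝ≥0∞} (hxy : x ≤ y) (n : ℕ) :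
    partitionFn x n ≤ partitionFn y n :=
  ENNReal.tsum_le_tsum fun f => by split_ifs <;> simp [weight_mono hxy f]

lemma tsum_weight_occupation_ge (k : ι) (n m : ℕ) :
    ∑' f : ι →₀ ℕ, (if f.degree = n + m ∧ m ≤ f k then weight x f else 0) =
      x k ^ m * partitionFn x n := by
  have hsupp : Function.support (fun f : ι →₀ ℕ =>
      if f.degree = n + m ∧ m ≤ f k then weight x f else 0) ⊆ Set.range (· + single k m) := by
    intro f hf
    have hm : m ≤ f k := by_contra fun h => hf (if_neg fun hc => h hc.2)
    exact ⟨f - single k m, tsub_add_cancel_of_le (single_le_iff.mpr hm)⟩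
  rw [← (add_left_injective (single k m)).tsum_eq hsupp, partitionFn, ← ENNReal.tsum_mul_left]
  refine tsum_congr fun g => ?_
  have hdeg : (g + single k m).degree = g.degree + m := by rw [map_add, degree_single]
  have hk : m ≤ (g + single k m) k := by simp
  simp only [hdeg, hk, and_true, Nat.add_right_cancel_iff, weight_add, weight_single,
    mul_comm (x k ^ m), ite_mul, zero_mul]

lemma partitionFn_succ [DecidableEq ι] (k : ι) (n : ℕ) :
    partitionFn x (n + 1) =
      partitionFn (Function.update x k 0) (n + 1) + x k * partitionFn x n := by
  rw [← pow_one (x k), ← tsum_weight_occupation_ge, partitionFn, partitionFn, ← ENNReal.tsum_add]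
  refine tsum_congr fun f => ?_
  rw [weight_update_zero]
  by_cases hdeg : f.degree = n + 1 <;> by_cases hk : f k = 0 <;>
    simp [hdeg, hk, Nat.one_le_iff_ne_zero]

lemma partitionFn_succ_le (n : ℕ) : partitionFn x (n + 1) ≤ (∑' j, x j) * partitionFn x n := by
  have occupied (f : ι →₀ ℕ) : (if f.degree = n + 1 then weight x f else 0) ≤
      ∑' k, if f.degree = n + 1 ∧ 1 ≤ f k then weight x f else 0 := by
    split_ifs with hdeg
    · obtain ⟨k, hk⟩ : f.support.Nonempty := by
        rw [support_nonempty_iff]; rintro rfl; simp at hdeg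
      refine le_trans (le_of_eq ?_) (ENNReal.le_tsum k)
      rw [if_pos ⟨hdeg, Nat.one_le_iff_ne_zero.mpr (mem_support_iff.mp hk)⟩]
    · exact zero_le
  calc partitionFn x (n + 1)
        ≤ ∑' f, ∑' k, if f.degree = n + 1 ∧ 1 ≤ f k then weight x f else 0 :=
          ENNReal.tsum_le_tsum occupied
    _ = ∑' k, x k * partitionFn x n := by
        rw [ENNReal.tsum_comm]
        exact tsum_congr fun k => by simpa using tsum_weight_occupation_ge x k n 1
    _ = (∑' j, x j) * partitionFn x n := ENNReal.tsum_mul_right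

lemma partitionFn_eq_iSup_indicator (n : ℕ) :
    partitionFn x n = ⨆ s : Finset ι, partitionFn ((s : Set ι).indicator x) n := by
  classical
  refine le_antisymm ?_ (iSup_le fun s => partitionFn_mono (Set.indicator_le_self _ x) n)
  rw [partitionFn, ENNReal.tsum_eq_iSup_sum]
  refine iSup_le fun F => le_iSup_of_le (F.biUnion Finsupp.support) ?_
  refine le_trans (le_of_eq (Finset.sum_congr rfl fun f hf => ?_)) (ENNReal.sum_le_tsum F)
  rw [weight_indicator x fun j hj => Finset.mem_biUnion.mpr ⟨f, hf, hj⟩]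

lemma isPF2_partitionFn_indicator (s : Finset ι) :
    IsPF2 (partitionFn ((s : Set ι).indicator x)) := by
  classical
  induction s using Finset.induction_on with
  | empty =>
    refine isPF2_of_forall_succ_eq_zero fun n => le_antisymm ?_ zero_le
    simpa using partitionFn_succ_le ((∅ : Set ι).indicator x) n
  | insert a s ha ih =>
    refine ih.of_succ_eq_add_mul (y := x a) (by rw [partitionFn_zero, partitionFn_zero]) fun n => ?_
    have hupd : Function.update ((↑(insert a s) : Set ι).indicator x) a 0 =
        (s : Set ι).indicator x := by
      ext j
      rcases eq_or_ne j a with rfl | hj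
      · simp [ha]
      · simp [hj, Set.indicator_apply]
    rw [partitionFn_succ _ a, hupd, Set.indicator_of_mem (by simp)]

lemma isPF2_partitionFn : IsPF2 (partitionFn x) := by
  have h := isPF2_iSup (fun s t hst => partitionFn_mono
    (Set.indicator_le_indicator_of_subset (Finset.coe_subset.mpr hst) (fun _ => zero_le)))
    (isPF2_partitionFn_indicator x)
  rwa [← funext (partitionFn_eq_iSup_indicator x)] at h

def canonicalProb (n : ℕ) (f : ι →₀ ℕ) : ℝ≥0∞ :=
  (if f.degree = n then weight x f else 0) / partitionFn x n

lemma tsum_canonicalProb_occupation_ge (k : ι) (j m : ℕ) :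
    ∑' f, (if m ≤ f k then canonicalProb x (j + m) f else 0) =
      x k ^ m * partitionFn x j / partitionFn x (j + m) := by
  rw [← tsum_weight_occupation_ge, div_eq_mul_inv, ← ENNReal.tsum_mul_right]
  refine tsum_congr fun f => ?_
  rw [canonicalProb, div_eq_mul_inv]
  split_ifs <;> simp_all

lemma tsum_canonicalProb_occupation_ge_of_lt (k : ι) {n m : ℕ} (hnm : n < m) :
    ∑' f, (if m ≤ f k then canonicalProb x n f else 0) = 0 := by
  refine ENNReal.tsum_eq_zero.mpr fun f => ?_
  by_cases hdeg : f.degree = n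
  · exact if_neg fun hm => absurd (hdeg ▸ le_degree k f) (by omega)
  · simp [canonicalProb, hdeg]

variable {x}

lemma partitionFn_ne_top (hx : ∑' j, x j ≠ ∞) (n : ℕ) : partitionFn x n ≠ ∞ := by
  induction n with
  | zero => simp [partitionFn_zero]
  | succ n ih => exact ne_top_of_le_ne_top (ENNReal.mul_ne_top hx ih) (partitionFn_succ_le x n)

lemma partitionFn_ne_zero {k : ι} (hk : x k ≠ 0) (n : ℕ) : partitionFn x n ≠ 0 :=
  ne_bot_of_le_ne_bot (pow_ne_zero n hk) (pow_le_partitionFn x k n)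

lemma tsum_canonicalProb (hx : ∑' j, x j ≠ ∞) {k : ι} (hk : x k ≠ 0) (n : ℕ) :
    ∑' f, canonicalProb x n f = 1 := by
  have h := tsum_canonicalProb_occupation_ge x k n 0
  simp only [zero_le, if_true, pow_zero, one_mul, add_zero] at h
  rw [h, ENNReal.div_self (partitionFn_ne_zero hk n) (partitionFn_ne_top hx n)]

lemma tsum_canonicalProb_occupation_ge_le_succ (hx : ∑' j, x j ≠ ∞) {k : ι} (hk : x k ≠ 0)
    (n m : ℕ) : ∑' f, (if m ≤ f k then canonicalProb x n f else 0) ≤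
      ∑' f, (if m ≤ f k then canonicalProb x (n + 1) f else 0) := by
  rcases lt_or_ge n m with hnm | hmn
  · rw [tsum_canonicalProb_occupation_ge_of_lt x k hnm]
    exact zero_le
  obtain ⟨j, rfl⟩ := Nat.exists_eq_add_of_le' hmn
  set Z := partitionFn x
  have hZ0 := partitionFn_ne_zero hk (x := x)
  have hZtop := partitionFn_ne_top hx
  have ratio : Z j / Z (j + m) ≤ Z (j + 1) / Z (j + 1 + m) :=
    calc Z j / Z (j + m) = Z j * Z (j + 1 + m) / (Z (j + m) * Z (j + 1 + m)) :=
          (ENNReal.mul_div_mul_right _ _ (hZ0 _) (hZtop _)).symm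
      _ ≤ Z (j + 1) * Z (j + m) / (Z (j + 1 + m) * Z (j + m)) := by
          rw [mul_comm (Z (j + m))]
          refine ENNReal.div_le_div_right ?_ _
          simpa only [add_right_comm j 1 m] using isPF2_partitionFn x 1 (Nat.le_add_right j m)
      _ = Z (j + 1) / Z (j + 1 + m) := ENNReal.mul_div_mul_right _ _ (hZ0 _) (hZtop _)
  rw [add_right_comm, tsum_canonicalProb_occupation_ge, tsum_canonicalProb_occupation_ge,
    mul_div_assoc, mul_div_assoc]
  exact mul_le_mul' le_rfl ratio

lemma tsum_mul_canonicalProb_le (hx : ∑' j, x j ≠ ∞) {k : ι} (hk : x k ≠ 0) {G : ℕ → ℝ≥0∞}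
    (hG : Monotone G) (n : ℕ) : ∑' f, G (f k) * canonicalProb x n f ≤ G n :=
  calc ∑' f, G (f k) * canonicalProb x n f ≤ ∑' f, G n * canonicalProb x n f := by
        refine ENNReal.tsum_le_tsum fun f => ?_
        by_cases hdeg : f.degree = n
        · exact mul_le_mul' (hG (hdeg ▸ le_degree k f)) le_rfl
        · simp [canonicalProb, hdeg]
    _ = G n := by rw [ENNReal.tsum_mul_left, tsum_canonicalProb hx hk, mul_one]

lemma tsum_mul_canonicalProb_le_succ (hx : ∑' j, x j ≠ ∞) {k : ι} (hk : x k ≠ 0)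
    {G : ℕ → ℝ≥0∞} (hG : Monotone G) (n : ℕ) :
    ∑' f, G (f k) * canonicalProb x n f ≤ ∑' f, G (f k) * canonicalProb x (n + 1) f :=
  tsum_mul_le_tsum_mul_of_tail_le (fun f : ι →₀ ℕ => f k)
    (tsum_canonicalProb_occupation_ge_le_succ hx hk n) hG

lemma tsum_subtype_degree_toReal {F : (ι →₀ ℕ) → ℝ≥0∞} (hF : ∀ f, F f ≠ ∞) (n : ℕ) :
    ∑' f : {f : ι →₀ ℕ // f.degree = n}, (F f).toReal =
      (∑' f : ι →₀ ℕ, if f.degree = n then F f else 0).toReal := by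
  rw [← ENNReal.tsum_toReal_eq (f := fun f : {f : ι →₀ ℕ // f.degree = n} => F f) fun f => hF f]
  congr 1
  exact (tsum_subtype {f : ι →₀ ℕ | f.degree = n} F).trans (tsum_congr fun f => by
    simp [Set.indicator_apply])

end PerfectBoseGas

end

open PerfectBoseGas

lemma weight_boltzmann (β : ℝ) (E : ℕ → ℝ) (f : ℕ →₀ ℕ) :
    weight (fun j => ENNReal.ofReal (Real.exp (-β * E j))) f =
      ENNReal.ofReal (Real.exp (-β * f.sum fun j m => (m : ℝ) * E j)) := by
  rw [Finsupp.sum, Finset.mul_sum, Real.exp_sum,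
    ENNReal.ofReal_prod_of_nonneg fun j _ => (Real.exp_pos _).le]
  refine Finset.prod_congr rfl fun j _ => ?_
  rw [mul_left_comm, Real.exp_nat_mul, ENNReal.ofReal_pow (Real.exp_pos _).le]

lemma canExp_eq_toReal (β : ℝ) (E : ℕ → ℝ) (n k : ℕ) {g : ℕ → ℝ} (hg : ∀ m, 0 ≤ g m) :
    canExp β E n k g = (∑' f, ENNReal.ofReal (g (f k)) *
      canonicalProb (fun j => ENNReal.ofReal (Real.exp (-β * E j))) n f).toReal := by
  set x : ℕ → ℝ≥0∞ := fun j => ENNReal.ofReal (Real.exp (-β * E j))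
  have hW (f : ℕ →₀ ℕ) : weight x f ≠ ∞ := by
    rw [weight_boltzmann]; exact ENNReal.ofReal_ne_top
  have hZ : Zcan β E n = (partitionFn x n).toReal := by
    rw [Zcan, partitionFn, ← tsum_subtype_degree_toReal hW]
    refine tsum_congr fun f => ?_
    rw [weight_boltzmann, ENNReal.toReal_ofReal (Real.exp_pos _).le]
  have hnum : ∑' f : {f : ℕ →₀ ℕ // f.sum (fun _ m => m) = n},
      g ((f : ℕ →₀ ℕ) k) * Real.exp (-β * (f : ℕ →₀ ℕ).sum fun j m => (m : ℝ) * E j) =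
      (∑' f : ℕ →₀ ℕ,
        if f.degree = n then ENNReal.ofReal (g (f k)) * weight x f else 0).toReal := by
    rw [← tsum_subtype_degree_toReal fun f => ENNReal.mul_ne_top ENNReal.ofReal_ne_top (hW f)]
    refine tsum_congr fun f => ?_
    rw [ENNReal.toReal_mul, weight_boltzmann, ENNReal.toReal_ofReal (hg _),
      ENNReal.toReal_ofReal (Real.exp_pos _).le]
  rw [canExp, hZ, hnum, ← ENNReal.toReal_inv, ← ENNReal.toReal_mul, ← ENNReal.tsum_mul_left]
  refine congrArg _ (tsum_congr fun f => ?_)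
  rw [canonicalProb, div_eq_mul_inv]
  split_ifs <;> ring

theorem canExp_moments_monotone_general (β : ℝ) (E : ℕ → ℝ)
    (hsum : Summable fun k => Real.exp (-β * E k)) (k : ℕ) (r : ℕ)
    (n : ℕ) :
    canExp β E n k (fun m => (m : ℝ) ^ r) ≤
      canExp β E (n + 1) k (fun m => (m : ℝ) ^ r) := by
  set x : ℕ → ℝ≥0∞ := fun j => ENNReal.ofReal (Real.exp (-β * E j))
  have hx : ∑' j, x j ≠ ∞ := by
    rw [← ENNReal.ofReal_tsum_of_nonneg (fun j => (Real.exp_pos _).le) hsum]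
    exact ENNReal.ofReal_ne_top
  have hk : x k ≠ 0 := by simp [x, Real.exp_pos]
  have hG : Monotone fun m : ℕ => ENNReal.ofReal ((m : ℝ) ^ r) := fun a b hab =>
    ENNReal.ofReal_le_ofReal (pow_le_pow_left₀ (Nat.cast_nonneg a) (Nat.cast_le.mpr hab) r)
  rw [canExp_eq_toReal β E n k (fun m => by positivity),
    canExp_eq_toReal β E (n + 1) k (fun m => by positivity)]
  exact ENNReal.toReal_mono (ne_top_of_le_ne_top ENNReal.ofReal_ne_top
    (tsum_mul_canonicalProb_le hx hk hG (n + 1))) (tsum_mul_canonicalProb_le_succ hx hk hG n)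

/-- For fixed k, V and r ≥ 1 the canonical moments ⟨N_k^r⟩ are monotonically
increasing in the particle number n. -/
theorem canExp_moments_monotone (β : ℝ) (E : ℕ → ℝ) (hβ : 0 < β)
    (hE0 : 0 < E 0) (hE01 : E 0 < E 1) (hEmono : Monotone E)
    (hsum : Summable fun k => Real.exp (-β * E k)) (k : ℕ) (r : ℕ) (hr : 1 ≤ r)
    (n : ℕ) :
    canExp β E n k (fun m => (m : ℝ) ^ r) ≤
      canExp β E (n + 1) k (fun m => (m : ℝ) ^ r) :=
  canExp_moments_monotone_general β E hsum k r n
end
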